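/- arXiv:1703.06976 — 4 statements merged into one kernel-verified Lean document; each statement's English description precedes it below -/
import Mathlib

section
/- Let n ≥ 2, let ϕ and φ satisfy conditions A1)–A3), let μ be a nonzero finite Borel measure on S^{n-1}, and suppose there exists a convex body K ∈ 𝒦₀ⁿ such that μ/|μ| = C̃_φ(K,·)/Ṽ_φ(K). Then μ is not concentrated in any closed hemisphere, i.e. ∫_{S^{n-1}} max(ξ·θ, 0) dμ(θ) > 0 for every ξ ∈ S^{n-1}. -/
open MeasureTheory Metric Set Filter
open scoped ENNReal NNReal Topology RealInnerProductSpace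

noncomputable section

/-- The unit sphere `S^{n-1}` in `ℝⁿ`. -/
def unitSphere (n : ℕ) : Set (EuclideanSpace ℝ (Fin n)) :=
  Metric.sphere (0 : EuclideanSpace ℝ (Fin n)) 1

/-- The spherical Lebesgue (Hausdorff) measure on `S^{n-1}`, i.e. the
`(n-1)`-dimensional Hausdorff measure restricted to the unit sphere. -/
def sphMeasure (n : ℕ) : Measure (EuclideanSpace ℝ (Fin n)) :=
  (μH[(n : ℝ) - 1] : Measure (EuclideanSpace ℝ (Fin n))).restrict (unitSphere n)

/-- `K` is a convex body in `ℝⁿ` with the origin in its interior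
(`K ∈ 𝒦₀ⁿ`). -/
def IsConvexBody0 {n : ℕ} (K : Set (EuclideanSpace ℝ (Fin n))) : Prop :=
  IsCompact K ∧ Convex ℝ K ∧ (0 : EuclideanSpace ℝ (Fin n)) ∈ interior K

/-- The radial function `ρ_K(u) = max {r > 0 : r • u ∈ K}`. -/
def radialFn {n : ℕ} (K : Set (EuclideanSpace ℝ (Fin n))) (u : EuclideanSpace ℝ (Fin n)) : ℝ :=
  sSup {r : ℝ | 0 < r ∧ r • u ∈ K}

/-- The support function `h_K(u) = max {x·u : x ∈ K}`. -/
def suppFn {n : ℕ} (K : Set (EuclideanSpace ℝ (Fin n))) (u : EuclideanSpace ℝ (Fin n)) : ℝ :=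
  sSup ((fun x => ⟪x, u⟫) '' K)

/-- The reverse radial Gauss image `α*_K(η)`: unit vectors `x/‖x‖` over boundary
points `x ∈ ∂K` lying on a supporting hyperplane of `K` with outer normal in `η`. -/
def revGauss {n : ℕ} (K η : Set (EuclideanSpace ℝ (Fin n))) :
    Set (EuclideanSpace ℝ (Fin n)) :=
  {v | ∃ x ∈ frontier K, (∃ u ∈ η, ⟪x, u⟫ = suppFn K u) ∧ v = ‖x‖⁻¹ • x}

/-- The dual Orlicz curvature `C̃_φ(K,η) = (1/n) ∫_{α*_K(η)} φ(ρ_K(u)) du`,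
as a set function. -/
def dualCurv {n : ℕ} (φ : ℝ → ℝ) (K η : Set (EuclideanSpace ℝ (Fin n))) : ℝ :=
  (n : ℝ)⁻¹ * ∫ u in revGauss K η, φ (radialFn K u) ∂(sphMeasure n)

/-- The dual Orlicz quermassintegral `Ṽ_ϕ(K) = (1/n) ∫_{S^{n-1}} ϕ(ρ_K(u)) du`. -/
def dualQuerm {n : ℕ} (ϕ : ℝ → ℝ) (K : Set (EuclideanSpace ℝ (Fin n))) : ℝ :=
  (n : ℝ)⁻¹ * ∫ u, ϕ (radialFn K u) ∂(sphMeasure n)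

/-- `μ` is not concentrated in any closed hemisphere. -/
def NotConcentrated {n : ℕ} (μ : Measure (EuclideanSpace ℝ (Fin n))) : Prop :=
  ∀ ξ ∈ unitSphere n, 0 < ∫ θ, max ⟪ξ, θ⟫ 0 ∂μ

/-- Conditions A1)–A3): `ϕ : (0,∞) → (0,∞)` is strictly decreasing with
`ϕ(0⁺) = ∞`, `ϕ(∞) = 0`, differentiable with `ϕ' < 0`, and
`φ(t) = -ϕ'(t)·t` is (positive and) continuous on `(0,∞)`. -/
def CondA (ϕ φ : ℝ → ℝ) : Prop :=
  StrictAntiOn ϕ (Set.Ioi 0) ∧ (∀ t > (0 : ℝ), 0 < ϕ t) ∧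
    Tendsto ϕ (𝓝[>] (0 : ℝ)) atTop ∧ Tendsto ϕ atTop (𝓝 (0 : ℝ)) ∧
    (∀ t > (0 : ℝ), HasDerivAt ϕ (-(φ t) / t) t) ∧
    (∀ t > (0 : ℝ), 0 < φ t) ∧ ContinuousOn φ (Set.Ioi 0)

/-- Conditions B1)–B3): `ϕ : (0,∞) → (0,∞)` is strictly increasing with
`ϕ(0⁺) = 0`, `ϕ(∞) = ∞`, differentiable with `ϕ' > 0`, and
`φ(t) = ϕ'(t)·t` is (positive and) continuous on `(0,∞)`. -/
def CondB (ϕ φ : ℝ → ℝ) : Prop :=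
  StrictMonoOn ϕ (Set.Ioi 0) ∧ (∀ t > (0 : ℝ), 0 < ϕ t) ∧
    Tendsto ϕ (𝓝[>] (0 : ℝ)) (𝓝 (0 : ℝ)) ∧ Tendsto ϕ atTop atTop ∧
    (∀ t > (0 : ℝ), HasDerivAt ϕ (φ t / t) t) ∧
    (∀ t > (0 : ℝ), 0 < φ t) ∧ ContinuousOn φ (Set.Ioi 0)

/-- The Wulff shape `[f] = ⋂_{u ∈ Ω} {x : x·u ≤ f(u)}`. -/
def wulff {n : ℕ} (Ω : Set (EuclideanSpace ℝ (Fin n))) (f : EuclideanSpace ℝ (Fin n) → ℝ) :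
    Set (EuclideanSpace ℝ (Fin n)) :=
  ⋂ u ∈ Ω, {x | ⟪x, u⟫ ≤ f u}

/-- The convex hull `⟨ρ⟩ = conv {ρ(u) u : u ∈ Ω}`. -/
def sphHull {n : ℕ} (Ω : Set (EuclideanSpace ℝ (Fin n))) (ρ : EuclideanSpace ℝ (Fin n) → ℝ) :
    Set (EuclideanSpace ℝ (Fin n)) :=
  convexHull ℝ ((fun u => ρ u • u) '' Ω)

/-- The set `∂′K` of boundary points of `K` having a unique outer unit normal. -/
def uniqNormalPts {n : ℕ} (K : Set (EuclideanSpace ℝ (Fin n))) :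
    Set (EuclideanSpace ℝ (Fin n)) :=
  {x | x ∈ frontier K ∧ ∃! v, v ∈ unitSphere n ∧ ⟪x, v⟫ = suppFn K v}

/-- The polar body `K* = {x : x·y ≤ 1 for all y ∈ K}`. -/
def polarBody {n : ℕ} (K : Set (EuclideanSpace ℝ (Fin n))) :
    Set (EuclideanSpace ℝ (Fin n)) :=
  {x | ∀ y ∈ K, ⟪x, y⟫ ≤ 1}

/-- `Ω` is a closed subset of `S^{n-1}` not contained in any closed hemisphere. -/
def GoodOmega {n : ℕ} (Ω : Set (EuclideanSpace ℝ (Fin n))) : Prop :=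
  Ω ⊆ unitSphere n ∧ IsClosed Ω ∧ ∀ ξ ∈ unitSphere n, ∃ u ∈ Ω, ⟪ξ, u⟫ < 0

/-!
Fix `ξ` and the open half-space `η = {w | 0 < ⟪ξ, w⟫}`. If `r • B ⊆ K ⊆ R • B`, every outer
normal `u` at the boundary point `ρ_K(v) v` satisfies `⟪v, u⟫ ≥ (r / R) ‖u‖`, so for unit `v`
with `‖v - ξ‖ < r / R` all these normals lie in `η`: the reverse radial Gauss image `α*_K(η)`
contains a spherical cap. Caps have positive `(n-1)`-dimensional Hausdorff measure (they project
onto a ball of `ξᗮ`), the sphere has finite measure (it is covered by finitely many caps, on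
which that projection is bi-Lipschitz), and `φ ∘ ρ_K` is continuous and positive on the sphere.
Hence `C̃_φ(K, η) > 0`, and the representation of `μ` forces `μ η > 0`.
-/

section RadialFunction

variable {n : ℕ} {K : Set (EuclideanSpace ℝ (Fin n))}

/-- When `gauge K u = 0` both sides are the junk value `0`: `sSup (Ioi 0) = 0` and `0⁻¹ = 0`. -/
theorem radialFn_eq_inv_gauge (hc : Convex ℝ K) (hcl : IsClosed K) (h0 : K ∈ 𝓝 0)
    (u : EuclideanSpace ℝ (Fin n)) : radialFn K u = (gauge K u)⁻¹ := by
  have hmem : ∀ t : ℝ, 0 < t → (t • u ∈ K ↔ t * gauge K u ≤ 1) := fun t ht => by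
    rw [← smul_eq_mul, ← gauge_smul_of_nonneg ht.le, gauge_le_one_iff_mem_closure hc h0,
      hcl.closure_eq]
  rcases (gauge_nonneg u : 0 ≤ gauge K u).eq_or_lt with hg | hg
  · have : {r : ℝ | 0 < r ∧ r • u ∈ K} = Ioi 0 := by
      ext t; simp +contextual [hmem, ← hg]
    rw [radialFn, this, ← hg, inv_zero, Real.sSup_of_not_bddAbove (not_bddAbove_Ioi 0)]
  · have : {r : ℝ | 0 < r ∧ r • u ∈ K} = Ioc 0 (gauge K u)⁻¹ := by
      ext t; simp +contextual [hmem, ← le_div_iff₀ hg, one_div]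
    rw [radialFn, this, csSup_Ioc (inv_pos.2 hg)]

namespace IsConvexBody0

variable (hK : IsConvexBody0 K)
include hK

theorem mem_nhds_zero : K ∈ 𝓝 0 := mem_interior_iff_mem_nhds.1 hK.2.2

theorem radialFn_eq : radialFn K = fun u => (gauge K u)⁻¹ :=
  funext (radialFn_eq_inv_gauge hK.2.1 hK.1.isClosed hK.mem_nhds_zero)

theorem gauge_pos {u : EuclideanSpace ℝ (Fin n)} (hu : u ≠ 0) : 0 < gauge K u :=
  (_root_.gauge_pos (absorbent_nhds_zero hK.mem_nhds_zero)
    ((NormedSpace.isVonNBounded_iff ℝ).2 hK.1.isBounded)).2 hu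

theorem radialFn_pos {u : EuclideanSpace ℝ (Fin n)} (hu : u ≠ 0) : 0 < radialFn K u := by
  rw [hK.radialFn_eq]
  exact inv_pos.2 (hK.gauge_pos hu)

theorem continuousOn_radialFn : ContinuousOn (radialFn K) {0}ᶜ := by
  rw [hK.radialFn_eq]
  exact (continuous_gauge hK.2.1 hK.mem_nhds_zero).continuousOn.inv₀
    fun u hu => (hK.gauge_pos hu).ne'

theorem radialFn_smul_mem_frontier {u : EuclideanSpace ℝ (Fin n)} (hu : u ≠ 0) :
    radialFn K u • u ∈ frontier K := by
  rw [← gauge_eq_one_iff_mem_frontier hK.2.1 hK.mem_nhds_zero,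
    gauge_smul_of_nonneg (hK.radialFn_pos hu).le, hK.radialFn_eq, smul_eq_mul,
    inv_mul_cancel₀ (hK.gauge_pos hu).ne']

end IsConvexBody0

end RadialFunction

section SupportingHyperplane

theorem Convex.exists_ne_zero_forall_inner_le_of_mem_frontier {E : Type*}
    [NormedAddCommGroup E] [InnerProductSpace ℝ E] [CompleteSpace E] {K : Set E}
    (hc : Convex ℝ K) (hK : (interior K).Nonempty) {x : E} (hx : x ∈ frontier K) :
    ∃ u ≠ 0, ∀ y ∈ K, ⟪y, u⟫ ≤ ⟪x, u⟫ := by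
  obtain ⟨f, hf⟩ := geometric_hahn_banach_open_point hc.interior isOpen_interior hx.2
  set u := (InnerProductSpace.toDual ℝ E).symm f
  have hu : ∀ y, ⟪y, u⟫ = f y := fun y => by
    rw [real_inner_comm]; exact InnerProductSpace.toDual_symm_apply
  refine ⟨u, ?_, fun y hy => ?_⟩
  · rintro hu0
    obtain ⟨z, hz⟩ := hK
    simpa [← hu, hu0] using hf z hz
  · have hle : ∀ z ∈ closure (interior K), f z ≤ f x :=
      fun z hz => closure_lt_subset_le f.continuous continuous_const
        (closure_mono (fun w hw => hf w hw) hz)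
    rw [hu, hu]
    exact hle y (hc.closure_interior_eq_closure_of_nonempty_interior hK ▸ subset_closure hy)

theorem mul_norm_le_inner_of_closedBall_subset {E : Type*} [NormedAddCommGroup E]
    [InnerProductSpace ℝ E] {K : Set E} {r : ℝ} (hr : 0 ≤ r) (hrK : closedBall 0 r ⊆ K)
    {x u : E} (hmax : ∀ y ∈ K, ⟪y, u⟫ ≤ ⟪x, u⟫) : r * ‖u‖ ≤ ⟪x, u⟫ := by
  rcases eq_or_ne u 0 with rfl | hu0
  · simp
  have hu : 0 < ‖u‖ := norm_pos_iff.2 hu0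
  have hmem : (r / ‖u‖) • u ∈ K := hrK <| by
    rw [mem_closedBall_zero_iff, norm_smul, Real.norm_eq_abs, abs_of_nonneg (by positivity),
      div_mul_cancel₀ _ hu.ne']
  have := hmax _ hmem
  rwa [real_inner_smul_left, real_inner_self_eq_norm_sq, div_mul_eq_mul_div, pow_two,
    mul_div_assoc, mul_div_cancel_right₀ _ hu.ne'] at this

variable {n : ℕ} {K : Set (EuclideanSpace ℝ (Fin n))}

theorem suppFn_eq_inner {x u : EuclideanSpace ℝ (Fin n)} (hx : x ∈ K)
    (hmax : ∀ y ∈ K, ⟪y, u⟫ ≤ ⟪x, u⟫) : suppFn K u = ⟪x, u⟫ :=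
  IsGreatest.csSup_eq ⟨mem_image_of_mem _ hx, by rintro _ ⟨y, hy, rfl⟩; exact hmax y hy⟩

theorem IsConvexBody0.exists_sphere_inter_ball_subset_revGauss (hK : IsConvexBody0 K)
    (ξ : EuclideanSpace ℝ (Fin n)) :
    ∃ δ > 0, sphere 0 1 ∩ ball ξ δ ⊆ revGauss K {w | 0 < ⟪ξ, w⟫} := by
  obtain ⟨r, hr, hrK⟩ := nhds_basis_closedBall.mem_iff.1 hK.mem_nhds_zero
  obtain ⟨R, hKR⟩ := hK.1.isBounded.subset_ball 0
  have hR : 0 < R := by simpa using hKR (interior_subset hK.2.2)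
  refine ⟨r / R, div_pos hr hR, ?_⟩
  rintro v ⟨hv, hvξ⟩
  have hv1 : ‖v‖ = 1 := mem_sphere_zero_iff_norm.1 hv
  have hv0 : v ≠ 0 := ne_zero_of_mem_unit_sphere ⟨v, hv⟩
  set ρ := radialFn K v
  have hρ : 0 < ρ := hK.radialFn_pos hv0
  have hx : ρ • v ∈ frontier K := hK.radialFn_smul_mem_frontier hv0
  have hxK : ρ • v ∈ K := hK.1.isClosed.frontier_subset hx
  obtain ⟨u, hu0, hmax⟩ := hK.2.1.exists_ne_zero_forall_inner_le_of_mem_frontier ⟨0, hK.2.2⟩ hx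
  have hu : 0 < ‖u‖ := norm_pos_iff.2 hu0
  have hru : r * ‖u‖ ≤ ρ * ⟪v, u⟫ := by
    simpa [real_inner_smul_left] using mul_norm_le_inner_of_closedBall_subset hr.le hrK hmax
  have hρR : ρ < R := by
    simpa [norm_smul, hv1, abs_of_pos hρ] using hKR hxK
  have hξv : -(‖ξ - v‖ * ‖u‖) ≤ ⟪ξ - v, u⟫ := neg_le_of_abs_le (abs_real_inner_le_norm _ _)
  have hdist : R * ‖ξ - v‖ < r := by
    rw [mem_ball, dist_comm, dist_eq_norm, lt_div_iff₀ hR] at hvξ; linarith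
  -- `R ⟪ξ, u⟫ ≥ ρ ⟪v, u⟫ - R ‖ξ - v‖ ‖u‖ > r ‖u‖ - r ‖u‖`
  have hξu : 0 < ⟪ξ, u⟫ := by
    rw [inner_sub_left] at hξv
    have hvu : 0 < ⟪v, u⟫ := pos_of_mul_pos_right ((mul_pos hr hu).trans_le hru) hρ.le
    nlinarith [mul_lt_mul_of_pos_right hdist hu, mul_lt_mul_of_pos_right hρR hvu]
  refine ⟨ρ • v, hx, ⟨u, hξu, (suppFn_eq_inner hxK hmax).symm⟩, ?_⟩
  rw [norm_smul, hv1, mul_one, Real.norm_eq_abs, abs_of_pos hρ, smul_smul,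
    inv_mul_cancel₀ hρ.ne', one_smul]

end SupportingHyperplane

section SphereGeometry

variable {E : Type*} [NormedAddCommGroup E] [InnerProductSpace ℝ E]

theorem coe_orthogonalProjectionOnto_orthogonal_unit_singleton {ξ : E} (hξ : ‖ξ‖ = 1) (v : E) :
    ((ℝ ∙ ξ)ᗮ.orthogonalProjectionOnto v : E) = v - ⟪ξ, v⟫ • ξ := by
  rw [Submodule.coe_orthogonalProjectionOnto_apply, Submodule.starProjection_orthogonal_val,
    Submodule.starProjection_unit_singleton ℝ hξ]

theorem norm_sub_inner_smul_sq {ξ v : E} (hξ : ‖ξ‖ = 1) (hv : ‖v‖ = 1) :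
    ‖v - ⟪ξ, v⟫ • ξ‖ ^ 2 = 1 - ⟪ξ, v⟫ ^ 2 := by
  rw [norm_sub_sq_real, real_inner_smul_right, norm_smul, Real.norm_eq_abs, hξ, hv,
    real_inner_comm]
  ring_nf; rw [sq_abs]; ring

-- The projection onto `ξᗮ` has a Lipschitz inverse on the cap `c ≤ ⟪ξ, v⟫` of the sphere.
theorem norm_sub_le_of_mem_cap {ξ v v' : E} (hξ : ‖ξ‖ = 1) {c : ℝ} (hc : 0 < c)
    (hv : ‖v‖ = 1) (hv' : ‖v'‖ = 1) (hcv : c ≤ ⟪ξ, v⟫) (hcv' : c ≤ ⟪ξ, v'⟫) :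
    ‖v - v'‖ ≤ (1 + c⁻¹) * ‖(v - ⟪ξ, v⟫ • ξ) - (v' - ⟪ξ, v'⟫ • ξ)‖ := by
  set a := ⟪ξ, v⟫
  set a' := ⟪ξ, v'⟫
  set w := v - a • ξ
  set w' := v' - a' • ξ
  have hw : ‖w‖ ^ 2 = 1 - a ^ 2 := norm_sub_inner_smul_sq hξ hv
  have hw' : ‖w'‖ ^ 2 = 1 - a' ^ 2 := norm_sub_inner_smul_sq hξ hv'
  have hsplit : v - v' = (a - a') • ξ + (w - w') := by
    simp only [w, w', sub_smul]; abel
  have hdiff : |‖w‖ - ‖w'‖| ≤ ‖w - w'‖ := abs_norm_sub_norm_le w w'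
  have hwle : ‖w‖ ≤ 1 := by nlinarith [norm_nonneg w]
  have hwle' : ‖w'‖ ≤ 1 := by nlinarith [norm_nonneg w']
  have ha : |a - a'| * (a + a') ≤ 2 * ‖w - w'‖ := by
    have hsq : (a - a') * (a + a') = -((‖w‖ - ‖w'‖) * (‖w‖ + ‖w'‖)) := by
      linear_combination hw - hw'
    calc |a - a'| * (a + a') = |(a - a') * (a + a')| := by
          rw [abs_mul, abs_of_pos (by linarith : 0 < a + a')]
      _ = |‖w‖ - ‖w'‖| * (‖w‖ + ‖w'‖) := by
          rw [hsq, abs_neg, abs_mul, abs_of_nonneg (by positivity : 0 ≤ ‖w‖ + ‖w'‖)]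
      _ ≤ ‖w - w'‖ * 2 := mul_le_mul hdiff (by linarith) (by positivity) (norm_nonneg _)
      _ = 2 * ‖w - w'‖ := mul_comm _ _
  have hab : |a - a'| ≤ c⁻¹ * ‖w - w'‖ := by
    rw [le_inv_mul_iff₀ hc]; nlinarith [abs_nonneg (a - a')]
  calc ‖v - v'‖ = ‖(a - a') • ξ + (w - w')‖ := by rw [hsplit]
    _ ≤ |a - a'| + ‖w - w'‖ := by
        refine (norm_add_le _ _).trans_eq ?_
        rw [norm_smul, hξ, mul_one, Real.norm_eq_abs]
    _ ≤ (1 + c⁻¹) * ‖w - w'‖ := by linarith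

theorem exists_norm_eq_one_sub_inner_smul_eq {ξ w : E} (hξ : ‖ξ‖ = 1) (hw : ⟪ξ, w⟫ = 0)
    (hw1 : ‖w‖ ≤ 1) : ∃ v, ‖v‖ = 1 ∧ v - ⟪ξ, v⟫ • ξ = w ∧ ‖v - ξ‖ ^ 2 ≤ 2 * ‖w‖ ^ 2 := by
  set a := √(1 - ‖w‖ ^ 2)
  have ha2 : a ^ 2 = 1 - ‖w‖ ^ 2 := Real.sq_sqrt (by nlinarith [norm_nonneg w])
  have ha0 : 0 ≤ a := Real.sqrt_nonneg _
  have hnorm : ∀ t : ℝ, ‖w + t • ξ‖ ^ 2 = ‖w‖ ^ 2 + t ^ 2 := fun t => by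
    rw [norm_add_sq_real, real_inner_smul_right, real_inner_comm, hw, norm_smul, hξ,
      Real.norm_eq_abs, mul_one, sq_abs]
    ring
  refine ⟨w + a • ξ, ?_, ?_, ?_⟩
  · rw [← pow_eq_one_iff_of_nonneg (norm_nonneg _) two_ne_zero, hnorm, ha2]; ring
  · rw [inner_add_right, hw, real_inner_smul_right, real_inner_self_eq_norm_sq, hξ]
    simp
  · have : w + a • ξ - ξ = w + (a - 1) • ξ := by rw [sub_smul, one_smul]; abel
    rw [this, hnorm]
    -- `‖w‖² + (a - 1)² = 2 - 2a ≤ 2 - 2a² = 2‖w‖²`, as `0 ≤ a ≤ 1`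
    nlinarith

variable [FiniteDimensional ℝ E]

theorem finrank_orthogonal_span_singleton_eq_sub_one {ξ : E} (hξ : ξ ≠ 0) :
    (Module.finrank ℝ (ℝ ∙ ξ)ᗮ : ℝ) = Module.finrank ℝ E - 1 := by
  rw [← (ℝ ∙ ξ).finrank_add_finrank_orthogonal, finrank_span_singleton hξ]
  push_cast; ring

end SphereGeometry

section SphereHausdorffMeasure

variable {E : Type*} [NormedAddCommGroup E] [InnerProductSpace ℝ E] [FiniteDimensional ℝ E]
  [MeasurableSpace E] [BorelSpace E]

theorem hausdorffMeasure_sphere_inter_cap_lt_top {ξ : E} (hξ : ‖ξ‖ = 1) {c : ℝ} (hc : 0 < c) :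
    μH[(Module.finrank ℝ E : ℝ) - 1] (sphere 0 1 ∩ {v | c ≤ ⟪ξ, v⟫}) < ⊤ := by
  set F := (ℝ ∙ ξ)ᗮ
  set S := sphere (0 : E) 1 ∩ {v | c ≤ ⟪ξ, v⟫}
  set d : ℝ := (Module.finrank ℝ F : ℝ)
  have hd : (Module.finrank ℝ E : ℝ) - 1 = d :=
    (finrank_orthogonal_span_singleton_eq_sub_one (norm_ne_zero_iff.1 (hξ ▸ one_ne_zero))).symm
  set f : S → F := fun v => F.orthogonalProjectionOnto v
  set C : ℝ≥0 := ⟨1 + c⁻¹, by positivity⟩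
  have hf : AntilipschitzWith C f := by
    refine AntilipschitzWith.of_le_mul_dist fun v v' => ?_
    rw [Subtype.dist_eq, dist_eq_norm, dist_eq_norm]
    change ‖(v : E) - v'‖ ≤
      (1 + c⁻¹) * ‖(F.orthogonalProjectionOnto v : E) - F.orthogonalProjectionOnto v'‖
    rw [coe_orthogonalProjectionOnto_orthogonal_unit_singleton hξ,
      coe_orthogonalProjectionOnto_orthogonal_unit_singleton hξ]
    exact norm_sub_le_of_mem_cap hξ hc (mem_sphere_zero_iff_norm.1 v.2.1)
      (mem_sphere_zero_iff_norm.1 v'.2.1) v.2.2 v'.2.2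
  calc μH[(Module.finrank ℝ E : ℝ) - 1] S = μH[d] (univ : Set S) := by
        rw [hd, ← Isometry.hausdorffMeasure_image (f := (Subtype.val : S → E))
          isometry_subtype_coe (Or.inl (Nat.cast_nonneg _)), image_univ, Subtype.range_coe]
    _ ≤ (C : ℝ≥0∞) ^ d * μH[d] (f '' univ) := hf.le_hausdorffMeasure_image (by positivity) _
    _ ≤ (C : ℝ≥0∞) ^ d * μH[d] (closedBall (0 : F) 1) := by
        gcongr
        rintro _ ⟨v, -, rfl⟩
        rw [mem_closedBall_zero_iff, ← mem_sphere_zero_iff_norm.1 v.2.1]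
        exact F.norm_orthogonalProjectionOnto_apply_le v
    _ < ⊤ := ENNReal.mul_lt_top (ENNReal.rpow_lt_top_of_nonneg (by positivity) ENNReal.coe_ne_top)
        (isCompact_closedBall _ _).measure_lt_top

theorem hausdorffMeasure_sphere_lt_top :
    μH[(Module.finrank ℝ E : ℝ) - 1] (sphere (0 : E) 1) < ⊤ := by
  refine (isCompact_sphere 0 1).measure_lt_top_of_nhdsWithin fun ξ hξ => ?_
  have hξ1 : ‖ξ‖ = 1 := mem_sphere_zero_iff_norm.1 hξ
  refine ⟨sphere 0 1 ∩ {v | 1 / 2 ≤ ⟪ξ, v⟫}, ?_,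
    hausdorffMeasure_sphere_inter_cap_lt_top hξ1 one_half_pos⟩
  refine inter_mem_nhdsWithin _ (mem_of_superset ?_ fun v (hv : 1 / 2 < ⟪ξ, v⟫) => hv.le)
  refine (isOpen_lt continuous_const
    (continuous_const.inner continuous_id : Continuous fun v : E => ⟪ξ, v⟫)).mem_nhds ?_
  show (1 : ℝ) / 2 < ⟪ξ, ξ⟫
  rw [real_inner_self_eq_norm_sq, hξ1]; norm_num

theorem hausdorffMeasure_sphere_inter_ball_pos {ξ : E} (hξ : ‖ξ‖ = 1) {δ : ℝ} (hδ : 0 < δ) :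
    0 < μH[(Module.finrank ℝ E : ℝ) - 1] (sphere 0 1 ∩ ball ξ δ) := by
  set F := (ℝ ∙ ξ)ᗮ
  set A := sphere (0 : E) 1 ∩ ball ξ δ
  have hball : ball (0 : F) (min 1 (δ / 2)) ⊆ F.orthogonalProjectionOnto '' A := by
    intro w hw
    rw [mem_ball_zero_iff, lt_min_iff] at hw
    obtain ⟨v, hv, hvw, hvξ⟩ := exists_norm_eq_one_sub_inner_smul_eq hξ
      (Submodule.mem_orthogonal_singleton_iff_inner_right.1 w.2) hw.1.le
    refine ⟨v, ⟨mem_sphere_zero_iff_norm.2 hv, ?_⟩, Subtype.ext ?_⟩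
    · rw [mem_ball, dist_eq_norm, ← abs_of_nonneg (norm_nonneg (v - ξ)), ← abs_of_pos hδ,
        ← sq_lt_sq]
      have : ‖(w : E)‖ < δ / 2 := hw.2
      nlinarith [norm_nonneg (w : E)]
    · rw [coe_orthogonalProjectionOnto_orthogonal_unit_singleton hξ, hvw]
  have hpos : 0 < μH[(Module.finrank ℝ F : ℝ)] (F.orthogonalProjectionOnto '' A) :=
    (measure_ball_pos _ _ (lt_min one_pos (half_pos hδ))).trans_le (measure_mono hball)
  rw [← finrank_orthogonal_span_singleton_eq_sub_one (norm_ne_zero_iff.1 (hξ ▸ one_ne_zero))]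
  simpa using hpos.trans_le
    (F.lipschitzWith_orthogonalProjectionOnto.hausdorffMeasure_image_le (Nat.cast_nonneg _) A)

end SphereHausdorffMeasure

section DualCurvature

variable {n : ℕ}

instance : IsFiniteMeasure (sphMeasure n) where
  measure_univ_lt_top := by
    simpa [sphMeasure, unitSphere, finrank_euclideanSpace_fin] using
      hausdorffMeasure_sphere_lt_top (E := EuclideanSpace ℝ (Fin n))

theorem sphMeasure_sphere_inter_ball_pos {ξ : EuclideanSpace ℝ (Fin n)} (hξ : ‖ξ‖ = 1) {δ : ℝ}
    (hδ : 0 < δ) : 0 < sphMeasure n (sphere 0 1 ∩ ball ξ δ) := by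
  rw [sphMeasure, Measure.restrict_apply (isClosed_sphere.measurableSet.inter measurableSet_ball),
    unitSphere, inter_right_comm, inter_self]
  simpa [finrank_euclideanSpace_fin] using hausdorffMeasure_sphere_inter_ball_pos hξ hδ

theorem ae_mem_sphere_sphMeasure :
    ∀ᵐ u ∂sphMeasure n, u ∈ sphere (0 : EuclideanSpace ℝ (Fin n)) 1 :=
  ae_restrict_mem isClosed_sphere.measurableSet

theorem IsConvexBody0.dualCurv_pos {K : Set (EuclideanSpace ℝ (Fin n))} (hK : IsConvexBody0 K)
    {φ : ℝ → ℝ} (hφ : ∀ t > 0, 0 < φ t) (hφc : ContinuousOn φ (Ioi 0))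
    {η : Set (EuclideanSpace ℝ (Fin n))} (hη : 0 < sphMeasure n (revGauss K η)) :
    0 < dualCurv φ K η := by
  obtain rfl | hn := Nat.eq_zero_or_pos n
  · simp [sphMeasure, unitSphere, sphere_eq_empty_of_subsingleton] at hη
  have hmem : ∀ u ∈ sphere (0 : EuclideanSpace ℝ (Fin n)) 1, u ≠ 0 :=
    fun u hu => ne_zero_of_mem_unit_sphere ⟨u, hu⟩
  have hpos : ∀ u ∈ sphere (0 : EuclideanSpace ℝ (Fin n)) 1, 0 < φ (radialFn K u) :=
    fun u hu => hφ _ (hK.radialFn_pos (hmem u hu))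
  have hint : Integrable (fun u => φ (radialFn K u)) (sphMeasure n) := by
    rw [← Measure.restrict_eq_self_of_ae_mem ae_mem_sphere_sphMeasure]
    exact (hφc.comp (hK.continuousOn_radialFn.mono hmem) fun u hu => hK.radialFn_pos (hmem u hu))
      |>.integrableOn_compact' (isCompact_sphere 0 1) isClosed_sphere.measurableSet
  refine mul_pos (inv_pos.2 (Nat.cast_pos.2 hn)) ?_
  have hnonneg : ∀ᵐ u ∂sphMeasure n, 0 ≤ φ (radialFn K u) :=
    ae_mem_sphere_sphMeasure.mono fun u hu => (hpos u hu).le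
  rw [setIntegral_pos_iff_support_of_nonneg_ae (ae_restrict_of_ae hnonneg) hint.integrableOn]
  calc 0 < sphMeasure n (revGauss K η) := hη
    _ = sphMeasure n (revGauss K η ∩ sphere 0 1) :=
        (measure_inter_conull (ae_iff.1 ae_mem_sphere_sphMeasure)).symm
    _ ≤ sphMeasure n (Function.support (fun u => φ (radialFn K u)) ∩ revGauss K η) :=
        measure_mono fun u hu => ⟨(hpos u hu.2).ne', hu.1⟩

end DualCurvature

theorem integral_max_inner_pos {E : Type*} [NormedAddCommGroup E] [InnerProductSpace ℝ E]
    [MeasurableSpace E] [BorelSpace E] {μ : Measure E} [IsFiniteMeasure μ]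
    (hμ : μ (sphere 0 1)ᶜ = 0) {ξ : E} (hpos : μ {θ | 0 < ⟪ξ, θ⟫} ≠ 0) :
    0 < ∫ θ, max ⟪ξ, θ⟫ 0 ∂μ := by
  have hbound : ∀ᵐ θ ∂μ, ‖max ⟪ξ, θ⟫ 0‖ ≤ ‖ξ‖ := by
    filter_upwards [measure_eq_zero_iff_ae_notMem.1 hμ] with θ hθ
    have hθ1 : ‖θ‖ = 1 := mem_sphere_zero_iff_norm.1 (not_not.1 hθ)
    rw [Real.norm_of_nonneg (le_max_right _ _)]
    exact max_le ((real_inner_le_norm ξ θ).trans_eq (by rw [hθ1, mul_one])) (norm_nonneg ξ)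
  have hint : Integrable (fun θ => max ⟪ξ, θ⟫ 0) μ :=
    (integrable_const ‖ξ‖).mono'
      ((continuous_const.inner continuous_id).max continuous_const).aestronglyMeasurable hbound
  have hnonneg : 0 ≤ fun θ => max ⟪ξ, θ⟫ 0 := fun θ => le_max_right _ _
  rw [integral_pos_iff_support_of_nonneg hnonneg hint]
  exact (pos_iff_ne_zero.2 hpos).trans_le (measure_mono fun θ hθ => (lt_max_of_lt_left hθ).ne')

theorem dual_orlicz_minkowski_necessity_general {n : ℕ} (ϕ φ : ℝ → ℝ)
    (hA : CondA ϕ φ) (μ : Measure (EuclideanSpace ℝ (Fin n))) [IsFiniteMeasure μ]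
    (hμ0 : μ ≠ 0) (hμs : μ (unitSphere n)ᶜ = 0)
    (K : Set (EuclideanSpace ℝ (Fin n))) (hK : IsConvexBody0 K)
    (hrep : ∀ η : Set (EuclideanSpace ℝ (Fin n)), MeasurableSet η →
      (μ η).toReal * dualQuerm φ K = (μ Set.univ).toReal * dualCurv φ K η) :
    NotConcentrated μ := by
  obtain ⟨-, -, -, -, -, hφ, hφc⟩ := hA
  intro ξ hξ
  set η := {θ | 0 < ⟪ξ, θ⟫}
  obtain ⟨δ, hδ, hsub⟩ := hK.exists_sphere_inter_ball_subset_revGauss ξ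
  have hcurv : 0 < dualCurv φ K η := hK.dualCurv_pos hφ hφc <|
    (sphMeasure_sphere_inter_ball_pos (mem_sphere_zero_iff_norm.1 hξ) hδ).trans_le
      (measure_mono hsub)
  have hμη : μ η ≠ 0 := by
    intro h
    have := hrep η (measurableSet_lt measurable_const (measurable_const.inner measurable_id))
    rw [h, ENNReal.toReal_zero, zero_mul, eq_comm, mul_eq_zero, ENNReal.toReal_eq_zero_iff] at this
    simp [hμ0, hcurv.ne'] at this
  exact integral_max_inner_pos hμs hμη

/-- **Theorem 5.1, direction ii) ⇒ i)**. If `n ≥ 2`, `ϕ, φ` satisfy A1)–A3), `μ` is a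
nonzero finite Borel measure on `S^{n-1}` and there is a convex body `K ∈ 𝒦₀ⁿ` with
`μ/|μ| = C̃_φ(K,·)/Ṽ_φ(K)`, then `μ` is not concentrated in any closed hemisphere. -/
theorem dual_orlicz_minkowski_necessity {n : ℕ} (hn : 2 ≤ n) (ϕ φ : ℝ → ℝ)
    (hA : CondA ϕ φ) (μ : Measure (EuclideanSpace ℝ (Fin n))) [IsFiniteMeasure μ]
    (hμ0 : μ ≠ 0) (hμs : μ (unitSphere n)ᶜ = 0)
    (K : Set (EuclideanSpace ℝ (Fin n))) (hK : IsConvexBody0 K)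
    (hrep : ∀ η : Set (EuclideanSpace ℝ (Fin n)), MeasurableSet η →
      (μ η).toReal * dualQuerm φ K = (μ Set.univ).toReal * dualCurv φ K η) :
    NotConcentrated μ :=
  dual_orlicz_minkowski_necessity_general ϕ φ hA μ hμ0 hμs K hK hrep
end
end

section
/- Let K ∈ 𝒦₀ⁿ and let φ : (0,∞) → (0,∞) be a continuous function. The dual Orlicz curvature measure C̃_φ(K,·) is absolutely continuous with respect to the surface area measure S(K,·): every Borel set η ⊆ S^{n-1} with S(K,η) = 0 satisfies C̃_φ(K,η) = 0. -/
open MeasureTheory Metric Set Filter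
open scoped ENNReal NNReal Topology RealInnerProductSpace

noncomputable section

/-!
The measure `C̃_φ(K, ·)` vanishes on `η` as soon as `α*_K(η)` is spherically null, whatever `φ`.
A direction in `α*_K(η)` is the radial projection `x / ‖x‖` of a boundary point `x` which either
lies in `∂′K` with normal in `η` (an `H^{n-1}`-null set by hypothesis, and `x ↦ x / ‖x‖` is
Lipschitz away from the origin), or has two outer normals `u₁ ≠ u₂`. In the latter case
`u₁ / h_K(u₁)` and `u₂ / h_K(u₂)` are two maximizers of `⟪·, x⟫` on the polar body `K*`, so the
support function of `K*` is not differentiable at `x`. By Rademacher's theorem, applied in the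
affine charts `{w | w i = ±1}` of the sphere, these directions form an `H^{n-1}`-null set.
-/

section RadialProjection

variable {E : Type*} [NormedAddCommGroup E] [NormedSpace ℝ E]

def radialProj (x : E) : E := ‖x‖⁻¹ • x

lemma norm_radialProj {x : E} (hx : x ≠ 0) : ‖radialProj x‖ = 1 := by
  rw [radialProj, norm_smul, norm_inv, norm_norm, inv_mul_cancel₀ (norm_ne_zero_iff.mpr hx)]

lemma radialProj_smul_of_pos {t : ℝ} (ht : 0 < t) (x : E) :
    radialProj (t • x) = radialProj x := by
  rw [radialProj, radialProj, norm_smul, Real.norm_of_nonneg ht.le, smul_smul, mul_inv_rev,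
    mul_assoc, inv_mul_cancel₀ ht.ne', mul_one]

lemma radialProj_of_norm_eq_one {x : E} (hx : ‖x‖ = 1) : radialProj x = x := by
  rw [radialProj, hx, inv_one, one_smul]

lemma norm_radialProj_sub_le {c : ℝ} (hc : 0 < c) {a b : E} (ha : c ≤ ‖a‖) (hb : c ≤ ‖b‖) :
    ‖radialProj a - radialProj b‖ ≤ 2 / c * ‖a - b‖ := by
  have ha0 : 0 < ‖a‖ := hc.trans_le ha
  have hb0 : 0 < ‖b‖ := hc.trans_le hb
  have hsplit : radialProj a - radialProj b = ‖a‖⁻¹ • (a - b) + (‖a‖⁻¹ - ‖b‖⁻¹) • b := by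
    rw [radialProj, radialProj, smul_sub, sub_smul]; abel
  have hsecond : ‖(‖a‖⁻¹ - ‖b‖⁻¹) • b‖ ≤ ‖a‖⁻¹ * ‖a - b‖ := by
    rw [norm_smul, Real.norm_eq_abs, inv_sub_inv ha0.ne' hb0.ne', abs_div,
      abs_of_pos (mul_pos ha0 hb0), div_mul_eq_mul_div, mul_div_mul_right _ _ hb0.ne',
      abs_sub_comm, inv_mul_eq_div]
    gcongr
    exact abs_norm_sub_norm_le a b
  calc ‖radialProj a - radialProj b‖
      ≤ ‖a‖⁻¹ * ‖a - b‖ + ‖a‖⁻¹ * ‖a - b‖ := by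
        rw [hsplit]
        refine (norm_add_le _ _).trans (add_le_add ?_ hsecond)
        rw [norm_smul, norm_inv, norm_norm]
    _ = 2 * ‖a‖⁻¹ * ‖a - b‖ := by ring
    _ ≤ 2 * c⁻¹ * ‖a - b‖ := by gcongr
    _ = 2 / c * ‖a - b‖ := by ring

lemma lipschitzOnWith_radialProj {c : ℝ} (hc : 0 < c) :
    LipschitzOnWith (2 / c).toNNReal (radialProj (E := E)) {x | c ≤ ‖x‖} := by
  refine LipschitzOnWith.of_dist_le_mul fun a ha b hb => ?_
  rw [dist_eq_norm, dist_eq_norm, Real.coe_toNNReal _ (by positivity)]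
  exact norm_radialProj_sub_le hc ha hb

end RadialProjection

section HyperplaneChart

variable {m : ℕ}

def hyperplaneChart (i : Fin (m + 1)) (s : ℝ) (y : Fin m → ℝ) :
    EuclideanSpace ℝ (Fin (m + 1)) :=
  WithLp.toLp 2 (i.insertNth s y)

@[simp] lemma hyperplaneChart_apply_self (i : Fin (m + 1)) (s : ℝ) (y : Fin m → ℝ) :
    hyperplaneChart i s y i = s := by
  simp [hyperplaneChart]

@[simp] lemma hyperplaneChart_apply_succAbove (i : Fin (m + 1)) (s : ℝ) (y : Fin m → ℝ)
    (k : Fin m) : hyperplaneChart i s y (i.succAbove k) = y k := by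
  simp [hyperplaneChart]

lemma hyperplaneChart_removeNth (w : EuclideanSpace ℝ (Fin (m + 1))) (i : Fin (m + 1)) :
    hyperplaneChart i (w i) (i.removeNth w) = w := by
  simp [hyperplaneChart]

lemma lipschitzWith_hyperplaneChart (i : Fin (m + 1)) (s : ℝ) :
    ∃ C, LipschitzWith C (hyperplaneChart i s) := by
  have hinsert : LipschitzWith 1 (Fin.insertNth (α := fun _ => ℝ) i s) :=
    LipschitzWith.of_dist_le_mul fun y y' => by simp [Fin.dist_insertNth_insertNth]
  exact ⟨_, (PiLp.lipschitzWith_toLp 2 fun _ : Fin (m + 1) => ℝ).comp hinsert⟩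

lemma one_le_norm_hyperplaneChart (i : Fin (m + 1)) {s : ℝ} (hs : |s| = 1) (y : Fin m → ℝ) :
    1 ≤ ‖hyperplaneChart i s y‖ := by
  simpa [hs] using PiLp.norm_apply_le (hyperplaneChart i s y) i

lemma inner_hyperplaneChart (z : EuclideanSpace ℝ (Fin (m + 1))) (i : Fin (m + 1)) (s : ℝ)
    (y : Fin m → ℝ) : ⟪z, hyperplaneChart i s y⟫ = z i * s + ∑ k, z (i.succAbove k) * y k := by
  simp [PiLp.inner_apply, Fin.sum_univ_succAbove _ i, mul_comm]

lemma hasFDerivAt_inner_hyperplaneChart (z : EuclideanSpace ℝ (Fin (m + 1))) (i : Fin (m + 1))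
    (s : ℝ) (y : Fin m → ℝ) :
    HasFDerivAt (fun y => ⟪z, hyperplaneChart i s y⟫)
      (∑ k, z (i.succAbove k) • ContinuousLinearMap.proj (R := ℝ) (φ := fun _ : Fin m => ℝ) k)
      y := by
  have hfun : (fun y => ⟪z, hyperplaneChart i s y⟫) = fun y =>
      (∑ k, z (i.succAbove k) • ContinuousLinearMap.proj (R := ℝ) (φ := fun _ : Fin m => ℝ) k) y
        + z i * s := by
    ext y'
    simp [inner_hyperplaneChart, add_comm]
  rw [hfun]
  exact (ContinuousLinearMap.hasFDerivAt _).add_const _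

end HyperplaneChart

lemma HasFDerivAt.eq_of_le_of_eq {E : Type*} [NormedAddCommGroup E] [NormedSpace ℝ E]
    {f g : E → ℝ} {f' g' : E →L[ℝ] ℝ} {x : E} (hg : HasFDerivAt g g' x) (hf : HasFDerivAt f f' x)
    (hle : ∀ y, g y ≤ f y) (heq : g x = f x) : g' = f' := by
  have hmin : IsLocalMin (fun y => f y - g y) x :=
    Eventually.of_forall fun y => by simp only [heq, sub_self, sub_nonneg, hle y]
  exact (sub_eq_zero.mp (hmin.hasFDerivAt_eq_zero (hf.sub hg))).symm

section SupportFunction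

variable {n : ℕ} {M : Set (EuclideanSpace ℝ (Fin n))}

lemma bddAbove_inner_image {B : ℝ} (hB : ∀ z ∈ M, ‖z‖ ≤ B) (w : EuclideanSpace ℝ (Fin n)) :
    BddAbove ((fun z => ⟪z, w⟫) '' M) := by
  refine ⟨B * ‖w‖, ?_⟩
  rintro _ ⟨z, hz, rfl⟩
  exact (real_inner_le_norm z w).trans (mul_le_mul_of_nonneg_right (hB z hz) (norm_nonneg w))

lemma inner_le_suppFn {z w : EuclideanSpace ℝ (Fin n)}
    (hM : BddAbove ((fun z => ⟪z, w⟫) '' M)) (hz : z ∈ M) : ⟪z, w⟫ ≤ suppFn M w :=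
  le_csSup hM (mem_image_of_mem _ hz)

lemma suppFn_eq_of_isMaxOn {z w : EuclideanSpace ℝ (Fin n)} (hz : z ∈ M)
    (hmax : IsMaxOn (fun z => ⟪z, w⟫) M z) : suppFn M w = ⟪z, w⟫ := by
  refine IsGreatest.csSup_eq ⟨mem_image_of_mem _ hz, ?_⟩
  rintro _ ⟨z', hz', rfl⟩
  exact isMaxOn_iff.mp hmax z' hz'

lemma lipschitzWith_suppFn (hne : M.Nonempty) {B : ℝ} (hB : ∀ z ∈ M, ‖z‖ ≤ B) :
    LipschitzWith B.toNNReal (suppFn M) := by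
  refine LipschitzWith.of_le_add_mul' B fun w w' => ?_
  refine csSup_le (hne.image _) ?_
  rintro _ ⟨z, hz, rfl⟩
  calc ⟪z, w⟫ = ⟪z, w'⟫ + ⟪z, w - w'⟫ := by rw [inner_sub_right]; ring
    _ ≤ suppFn M w' + B * dist w w' := by
      gcongr
      · exact inner_le_suppFn (bddAbove_inner_image hB w') hz
      · rw [dist_eq_norm]
        exact (real_inner_le_norm z _).trans
          (mul_le_mul_of_nonneg_right (hB z hz) (norm_nonneg _))

def nonuniqueMaximizerDirs (M : Set (EuclideanSpace ℝ (Fin n))) :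
    Set (EuclideanSpace ℝ (Fin n)) :=
  {w | ∃ z₁ ∈ M, ∃ z₂ ∈ M, z₁ ≠ z₂ ∧ IsMaxOn (fun z => ⟪z, w⟫) M z₁ ∧
    IsMaxOn (fun z => ⟪z, w⟫) M z₂}

lemma smul_mem_nonuniqueMaximizerDirs {t : ℝ} (ht : 0 < t) {w : EuclideanSpace ℝ (Fin n)}
    (hw : w ∈ nonuniqueMaximizerDirs M) : t • w ∈ nonuniqueMaximizerDirs M := by
  have hscale : ∀ z, IsMaxOn (fun z => ⟪z, w⟫) M z → IsMaxOn (fun z => ⟪z, t • w⟫) M z :=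
    fun z hz => isMaxOn_iff.mpr fun z' hz' => by
      simpa only [real_inner_smul_right] using
        mul_le_mul_of_nonneg_left (isMaxOn_iff.mp hz z' hz') ht.le
  obtain ⟨z₁, hz₁, z₂, hz₂, hne, h₁, h₂⟩ := hw
  exact ⟨z₁, hz₁, z₂, hz₂, hne, hscale z₁ h₁, hscale z₂ h₂⟩

end SupportFunction

section SingularDirections

variable {m : ℕ} {M : Set (EuclideanSpace ℝ (Fin (m + 1)))}

/-- Each maximizer `z` gives an affine minorant `⟪z, hyperplaneChart i s ·⟫` of the chart
representation of `suppFn M` touching it at `y`; so its coordinates off `i` are the derivative. -/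
lemma eq_of_isMaxOn_of_differentiableAt {B : ℝ} (hB : ∀ z ∈ M, ‖z‖ ≤ B) {i : Fin (m + 1)}
    {s : ℝ} (hs : s ≠ 0) {y : Fin m → ℝ}
    (hdiff : DifferentiableAt ℝ (suppFn M ∘ hyperplaneChart i s) y)
    {z₁ z₂ : EuclideanSpace ℝ (Fin (m + 1))} (hz₁ : z₁ ∈ M) (hz₂ : z₂ ∈ M)
    (h₁ : IsMaxOn (fun z => ⟪z, hyperplaneChart i s y⟫) M z₁)
    (h₂ : IsMaxOn (fun z => ⟪z, hyperplaneChart i s y⟫) M z₂) : z₁ = z₂ := by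
  have hderiv : ∀ z ∈ M, IsMaxOn (fun z => ⟪z, hyperplaneChart i s y⟫) M z →
      ∀ k, z (i.succAbove k) = fderiv ℝ (suppFn M ∘ hyperplaneChart i s) y (Pi.single k 1) := by
    intro z hz hmax k
    rw [← (hasFDerivAt_inner_hyperplaneChart z i s y).eq_of_le_of_eq hdiff.hasFDerivAt
      (fun _ => inner_le_suppFn (bddAbove_inner_image hB _) hz) (suppFn_eq_of_isMaxOn hz hmax).symm]
    simp [Pi.single_apply]
  have hoff : ∀ k, z₁ (i.succAbove k) = z₂ (i.succAbove k) :=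
    fun k => (hderiv z₁ hz₁ h₁ k).trans (hderiv z₂ hz₂ h₂ k).symm
  have hval : ⟪z₁, hyperplaneChart i s y⟫ = ⟪z₂, hyperplaneChart i s y⟫ :=
    le_antisymm (isMaxOn_iff.mp h₂ z₁ hz₁) (isMaxOn_iff.mp h₁ z₂ hz₂)
  have hi : z₁ i = z₂ i := by
    simp only [inner_hyperplaneChart, hoff, add_left_inj] at hval
    exact mul_right_cancel₀ hs hval
  rw [← hyperplaneChart_removeNth z₁ i, ← hyperplaneChart_removeNth z₂ i, hi]
  congr 1
  funext k
  exact hoff k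

lemma volume_hyperplaneChart_preimage_nonuniqueMaximizerDirs_eq_zero (hne : M.Nonempty) {B : ℝ}
    (hB : ∀ z ∈ M, ‖z‖ ≤ B) (i : Fin (m + 1)) {s : ℝ} (hs : s ≠ 0) :
    volume {y | hyperplaneChart i s y ∈ nonuniqueMaximizerDirs M} = 0 := by
  obtain ⟨C, hC⟩ := lipschitzWith_hyperplaneChart i s
  have hrademacher := ((lipschitzWith_suppFn hne hB).comp hC).ae_differentiableAt (μ := volume)
  refine measure_mono_null ?_ (ae_iff.mp hrademacher)
  rintro y ⟨z₁, hz₁, z₂, hz₂, hne₁₂, h₁, h₂⟩ hdiff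
  exact hne₁₂ (eq_of_isMaxOn_of_differentiableAt hB hs hdiff hz₁ hz₂ h₁ h₂)

end SingularDirections

section Cones

variable {m : ℕ}

lemma hausdorffMeasure_radialProj_comp_hyperplaneChart_image_eq_zero {i : Fin (m + 1)} {s : ℝ}
    (hs : |s| = 1) {A : Set (Fin m → ℝ)} (hA : volume A = 0) :
    μH[m] ((radialProj ∘ hyperplaneChart i s) '' A) = 0 := by
  obtain ⟨C, hC⟩ := lipschitzWith_hyperplaneChart i s
  have hlip := (lipschitzOnWith_radialProj one_pos).comp hC.lipschitzOnWith
    (s := A) fun y _ => one_le_norm_hyperplaneChart i hs y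
  have hvol : (μH[m] : Measure (Fin m → ℝ)) = volume := by
    simpa using hausdorffMeasure_pi_real (ι := Fin m)
  refine le_antisymm ((hlip.hausdorffMeasure_image_le (Nat.cast_nonneg m)).trans ?_) zero_le
  rw [hvol, hA, mul_zero]

lemma cone_inter_sphere_subset_iUnion {C : Set (EuclideanSpace ℝ (Fin (m + 1)))}
    (hC : ∀ t : ℝ, 0 < t → ∀ w ∈ C, t • w ∈ C) :
    C ∩ sphere 0 1 ⊆ ⋃ i, ⋃ s ∈ ({1, -1} : Set ℝ),
      (radialProj ∘ hyperplaneChart i s) '' {y | hyperplaneChart i s y ∈ C} := by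
  rintro u ⟨huC, hu⟩
  rw [mem_sphere_zero_iff_norm] at hu
  obtain ⟨i, hi⟩ : ∃ i, u i ≠ 0 := by
    by_contra! h
    exact one_ne_zero (hu.symm.trans (by rw [show u = 0 from PiLp.ext h, norm_zero]))
  set w := |u i|⁻¹ • u
  have hwi : |w i| = 1 := by
    simp [w, abs_mul, abs_inv, inv_mul_cancel₀ (abs_ne_zero.mpr hi)]
  refine mem_iUnion.mpr
    ⟨i, mem_iUnion₂.mpr ⟨w i, (abs_eq zero_le_one).mp hwi, i.removeNth w, ?_, ?_⟩⟩
  · change hyperplaneChart i (w i) (i.removeNth w) ∈ C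
    rw [hyperplaneChart_removeNth]
    exact hC _ (inv_pos.mpr (abs_pos.mpr hi)) u huC
  · rw [Function.comp_apply, hyperplaneChart_removeNth,
      radialProj_smul_of_pos (inv_pos.mpr (abs_pos.mpr hi)), radialProj_of_norm_eq_one hu]

lemma hausdorffMeasure_cone_inter_sphere_eq_zero {C : Set (EuclideanSpace ℝ (Fin (m + 1)))}
    (hC : ∀ t : ℝ, 0 < t → ∀ w ∈ C, t • w ∈ C)
    (hnull : ∀ i (s : ℝ), |s| = 1 → volume {y | hyperplaneChart i s y ∈ C} = 0) :
    μH[m] (C ∩ sphere 0 1) = 0 := by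
  refine measure_mono_null (cone_inter_sphere_subset_iUnion hC) (measure_iUnion_null fun i => ?_)
  refine (measure_biUnion_null_iff (toFinite _).countable).mpr fun s hs => ?_
  have hs' : |s| = 1 := by rcases hs with rfl | rfl <;> simp
  exact hausdorffMeasure_radialProj_comp_hyperplaneChart_image_eq_zero hs' (hnull i s hs')

lemma hausdorffMeasure_nonuniqueMaximizerDirs_inter_sphere_eq_zero
    {M : Set (EuclideanSpace ℝ (Fin (m + 1)))} (hne : M.Nonempty) {B : ℝ} (hB : ∀ z ∈ M, ‖z‖ ≤ B) :
    μH[m] (nonuniqueMaximizerDirs M ∩ sphere 0 1) = 0 :=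
  hausdorffMeasure_cone_inter_sphere_eq_zero
    (fun _ ht _ hw => smul_mem_nonuniqueMaximizerDirs ht hw) fun i _ hs =>
      volume_hyperplaneChart_preimage_nonuniqueMaximizerDirs_eq_zero hne hB i
        (abs_ne_zero.mp (hs.trans_ne one_ne_zero))

end Cones

section ConvexBody

variable {n : ℕ} {K : Set (EuclideanSpace ℝ (Fin n))} {r B : ℝ}

lemma le_norm_of_mem_frontier (hr : closedBall 0 r ⊆ K) {x : EuclideanSpace ℝ (Fin n)}
    (hx : x ∈ frontier K) : r ≤ ‖x‖ := by
  by_contra! h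
  exact hx.2 (interior_mono hr (ball_subset_interior_closedBall (mem_ball_zero_iff.mpr h)))

lemma le_suppFn_of_closedBall_subset (hKB : ∀ x ∈ K, ‖x‖ ≤ B) (hr0 : 0 ≤ r)
    (hr : closedBall 0 r ⊆ K) {u : EuclideanSpace ℝ (Fin n)} (hu : ‖u‖ = 1) : r ≤ suppFn K u := by
  have hru : r • u ∈ K := hr (by simp [norm_smul, hu, abs_of_nonneg hr0])
  simpa [real_inner_smul_left, real_inner_self_eq_norm_sq, hu] using
    inner_le_suppFn (bddAbove_inner_image hKB u) hru

lemma zero_mem_polarBody : (0 : EuclideanSpace ℝ (Fin n)) ∈ polarBody K :=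
  fun _ _ => by simp

lemma norm_le_of_mem_polarBody (hr0 : 0 < r) (hr : closedBall 0 r ⊆ K)
    {z : EuclideanSpace ℝ (Fin n)} (hz : z ∈ polarBody K) : ‖z‖ ≤ r⁻¹ := by
  rcases eq_or_ne z 0 with rfl | hz0
  · simpa using hr0.le
  have hnz : 0 < ‖z‖ := norm_pos_iff.mpr hz0
  have hy : (r / ‖z‖) • z ∈ K := hr (by simp [norm_smul, abs_of_pos hr0, hnz.ne'])
  have hinner : ⟪z, (r / ‖z‖) • z⟫ = ‖z‖ * r := by
    rw [real_inner_smul_right, real_inner_self_eq_norm_sq]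
    field_simp
  rw [← one_div, le_div_iff₀ hr0, ← hinner]
  exact hz _ hy

lemma inv_suppFn_smul_mem_polarBody {u : EuclideanSpace ℝ (Fin n)}
    (hK : BddAbove ((fun x => ⟪x, u⟫) '' K)) (hpos : 0 < suppFn K u) :
    (suppFn K u)⁻¹ • u ∈ polarBody K := fun y hy => by
  rw [real_inner_smul_left, real_inner_comm y u]
  exact inv_mul_le_one_of_le₀ (inner_le_suppFn hK hy) hpos.le

lemma isMaxOn_inner_polarBody {x u : EuclideanSpace ℝ (Fin n)} (hx : x ∈ K)
    (hxu : ⟪x, u⟫ = suppFn K u) (hpos : suppFn K u ≠ 0) :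
    IsMaxOn (fun z => ⟪z, x⟫) (polarBody K) ((suppFn K u)⁻¹ • u) :=
  isMaxOn_iff.mpr fun z hz => by
    rw [real_inner_smul_left, real_inner_comm x u, hxu, inv_mul_cancel₀ hpos]
    exact hz x hx

lemma mem_nonuniqueMaximizerDirs_polarBody (hKB : ∀ x ∈ K, ‖x‖ ≤ B) (hr0 : 0 < r)
    (hr : closedBall 0 r ⊆ K) {x u₁ u₂ : EuclideanSpace ℝ (Fin n)} (hx : x ∈ K)
    (hu₁ : ‖u₁‖ = 1) (hu₂ : ‖u₂‖ = 1) (hne : u₁ ≠ u₂)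
    (h₁ : ⟪x, u₁⟫ = suppFn K u₁) (h₂ : ⟪x, u₂⟫ = suppFn K u₂) :
    x ∈ nonuniqueMaximizerDirs (polarBody K) := by
  have hpos₁ := hr0.trans_le (le_suppFn_of_closedBall_subset hKB hr0.le hr hu₁)
  have hpos₂ := hr0.trans_le (le_suppFn_of_closedBall_subset hKB hr0.le hr hu₂)
  refine ⟨_, inv_suppFn_smul_mem_polarBody (bddAbove_inner_image hKB u₁) hpos₁,
    _, inv_suppFn_smul_mem_polarBody (bddAbove_inner_image hKB u₂) hpos₂, fun heq => hne ?_,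
    isMaxOn_inner_polarBody hx h₁ hpos₁.ne', isMaxOn_inner_polarBody hx h₂ hpos₂.ne'⟩
  have hsupp : suppFn K u₁ = suppFn K u₂ := by
    simpa [norm_smul, hu₁, hu₂, abs_of_pos hpos₁, abs_of_pos hpos₂] using congr(‖$heq‖)
  rw [hsupp] at heq
  exact smul_right_injective _ (inv_ne_zero hpos₂.ne') heq

lemma revGauss_subset (hKB : ∀ x ∈ K, ‖x‖ ≤ B) (hKcl : IsClosed K) (hr0 : 0 < r)
    (hr : closedBall 0 r ⊆ K) {η : Set (EuclideanSpace ℝ (Fin n))} (hη : η ⊆ unitSphere n)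
    {ν : EuclideanSpace ℝ (Fin n) → EuclideanSpace ℝ (Fin n)}
    (hν : ∀ x ∈ uniqNormalPts K, ν x ∈ unitSphere n ∧ ⟪x, ν x⟫ = suppFn K (ν x)) :
    revGauss K η ⊆ radialProj '' {x ∈ uniqNormalPts K | ν x ∈ η} ∪
      nonuniqueMaximizerDirs (polarBody K) ∩ sphere 0 1 := by
  rintro _ ⟨x, hxK, ⟨u, huη, hxu⟩, rfl⟩
  have hx0 : x ≠ 0 := norm_pos_iff.mp (hr0.trans_le (le_norm_of_mem_frontier hr hxK))
  by_cases hx : x ∈ uniqNormalPts K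
  · obtain ⟨v, -, huniq⟩ := hx.2
    refine .inl ⟨x, ⟨hx, ?_⟩, rfl⟩
    rwa [huniq _ (hν x hx), ← huniq u ⟨hη huη, hxu⟩]
  · obtain ⟨u', ⟨hu', hxu'⟩, hne⟩ :
        ∃ u', (u' ∈ unitSphere n ∧ ⟪x, u'⟫ = suppFn K u') ∧ u' ≠ u := by
      by_contra! h
      exact hx ⟨hxK, u, ⟨hη huη, hxu⟩, h⟩
    refine .inr ⟨smul_mem_nonuniqueMaximizerDirs (inv_pos.mpr (norm_pos_iff.mpr hx0)) ?_,
      mem_sphere_zero_iff_norm.mpr (norm_radialProj hx0)⟩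
    exact mem_nonuniqueMaximizerDirs_polarBody hKB hr0 hr (hKcl.frontier_subset hxK)
      (mem_sphere_zero_iff_norm.mp hu') (mem_sphere_zero_iff_norm.mp (hη huη)) hne hxu' hxu

end ConvexBody

theorem dualCurv_absolutelyContinuous_general {n : ℕ} (hn : 0 < n)
    (K : Set (EuclideanSpace ℝ (Fin n))) (hK : IsConvexBody0 K)
    (φ : ℝ → ℝ)
    (νm : EuclideanSpace ℝ (Fin n) → EuclideanSpace ℝ (Fin n))
    (hνm : ∀ x ∈ uniqNormalPts K, νm x ∈ unitSphere n ∧ ⟪x, νm x⟫ = suppFn K (νm x)) :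
    ∀ η : Set (EuclideanSpace ℝ (Fin n)), MeasurableSet η → η ⊆ unitSphere n →
      μH[(n : ℝ) - 1] {x ∈ uniqNormalPts K | νm x ∈ η} = 0 →
      dualCurv φ K η = 0 := by
  intro η _ hη hη0
  obtain ⟨m, rfl⟩ : ∃ m, n = m + 1 := ⟨n - 1, (Nat.succ_pred_eq_of_pos hn).symm⟩
  have hdim : ((m + 1 : ℕ) : ℝ) - 1 = m := by push_cast; ring
  rw [hdim] at hη0
  obtain ⟨hKc, -, hK0⟩ := hK
  obtain ⟨r, hr0, hr⟩ :=
    Metric.nhds_basis_closedBall.mem_iff.mp (mem_interior_iff_mem_nhds.mp hK0)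
  obtain ⟨B, hKB⟩ := isBounded_iff_forall_norm_le.mp hKc.isBounded
  have hregular : μH[m] (radialProj '' {x ∈ uniqNormalPts K | νm x ∈ η}) = 0 := by
    have hT : {x ∈ uniqNormalPts K | νm x ∈ η} ⊆ {x | r ≤ ‖x‖} :=
      fun x hx => le_norm_of_mem_frontier hr hx.1.1
    have hlip := (lipschitzOnWith_radialProj hr0).mono hT
    refine le_antisymm ((hlip.hausdorffMeasure_image_le (Nat.cast_nonneg m)).trans ?_) zero_le
    rw [hη0, mul_zero]
  have hsingular : μH[m] (nonuniqueMaximizerDirs (polarBody K) ∩ sphere 0 1) = 0 :=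
    hausdorffMeasure_nonuniqueMaximizerDirs_inter_sphere_eq_zero ⟨0, zero_mem_polarBody⟩
      fun _ hz => norm_le_of_mem_polarBody hr0 hr hz
  have hnull : sphMeasure (m + 1) (revGauss K η) = 0 := by
    refine le_antisymm ((Measure.restrict_apply_le _ _).trans ?_) zero_le
    rw [hdim, measure_mono_null (revGauss_subset hKB hKc.isClosed hr0 hr hη hνm)
      (measure_union_null hregular hsingular)]
  rw [dualCurv, Measure.restrict_eq_zero.mpr hnull, integral_zero_measure, mul_zero]

/-- **Proposition 3.1 ii)**. For `K ∈ 𝒦₀ⁿ` and continuous `φ : (0,∞) → (0,∞)`, the dual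
Orlicz curvature measure is absolutely continuous with respect to the surface area
measure `S(K,η) = H^{n-1}(ν_K⁻¹(η))`: if a Borel set `η ⊆ S^{n-1}` satisfies
`S(K,η) = 0` then `C̃_φ(K,η) = 0`. Here `νm` selects the unique outer unit normal on
`∂′K`. -/
theorem dualCurv_absolutelyContinuous {n : ℕ} (hn : 0 < n)
    (K : Set (EuclideanSpace ℝ (Fin n))) (hK : IsConvexBody0 K)
    (φ : ℝ → ℝ) (hφc : ContinuousOn φ (Set.Ioi 0)) (hφp : ∀ t > (0 : ℝ), 0 < φ t)
    (νm : EuclideanSpace ℝ (Fin n) → EuclideanSpace ℝ (Fin n))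
    (hνm : ∀ x ∈ uniqNormalPts K, νm x ∈ unitSphere n ∧ ⟪x, νm x⟫ = suppFn K (νm x)) :
    ∀ η : Set (EuclideanSpace ℝ (Fin n)), MeasurableSet η → η ⊆ unitSphere n →
      μH[(n : ℝ) - 1] {x ∈ uniqNormalPts K | νm x ∈ η} = 0 →
      dualCurv φ K η = 0 :=
  dualCurv_absolutelyContinuous_general hn K hK φ νm hνm
end
end

section
/- Let ϕ and φ satisfy conditions A1)–A3), let Ω ⊆ S^{n-1} be a closed set not contained in any closed hemisphere, let ρ₀, g : Ω → ℝ with ρ₀ continuous positive and g continuous, let o(t,·) : Ω → ℝ be continuous for each t ∈ (−δ,δ) with o(t,·)/t → 0 uniformly on Ω as t → 0, and set log ρ_t = log ρ₀ + t g + o(t,·) on Ω. Then: (a) for every v ∈ S^{n-1} outside the spherical-measure-zero set η₀ of non-regular normal directions of ⟨ρ₀⟩, lim_{t→0} [ϕ(h_{⟨ρ_t⟩}(v)^{-1}) − ϕ(h_{⟨ρ₀⟩}(v)^{-1})]/t = φ(h_{⟨ρ₀⟩}(v)^{-1}) · g(α*_{⟨ρ₀⟩}(v)); and (b) there exist δ′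 > 0 and M > 0 such that |ϕ(h_{⟨ρ_t⟩}(v)^{-1}) − ϕ(h_{⟨ρ₀⟩}(v)^{-1})| ≤ M|t| for all v ∈ S^{n-1} and all t ∈ (−δ′,δ′). -/
open MeasureTheory Metric Set Filter
open scoped ENNReal NNReal Topology RealInnerProductSpace

noncomputable section

section Helpers
variable {n : ℕ}

lemma inner_isLinear (v : EuclideanSpace ℝ (Fin n)) :
    IsLinearMap ℝ (fun x : EuclideanSpace ℝ (Fin n) => ⟪x, v⟫) :=
  ⟨fun x y => inner_add_left x y v, fun c x => real_inner_smul_left x v c⟩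

lemma hull_inner_le {Ω : Set (EuclideanSpace ℝ (Fin n))} {ρ : EuclideanSpace ℝ (Fin n) → ℝ}
    {v : EuclideanSpace ℝ (Fin n)} {B : ℝ}
    (h : ∀ u ∈ Ω, ρ u * ⟪u, v⟫ ≤ B) : ∀ x ∈ sphHull Ω ρ, ⟪x, v⟫ ≤ B := by
  intro x hx
  have hconv : Convex ℝ {w : EuclideanSpace ℝ (Fin n) | ⟪w, v⟫ ≤ B} :=
    convex_halfSpace_le (inner_isLinear v) B
  have hsub : sphHull Ω ρ ⊆ {w | ⟪w, v⟫ ≤ B} := by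
    apply convexHull_min _ hconv
    rintro _ ⟨u, hu, rfl⟩
    show (⟪ρ u • u, v⟫ : ℝ) ≤ B
    rw [real_inner_smul_left]
    exact h u hu
  exact hsub hx

lemma suppFn_hull_le {Ω : Set (EuclideanSpace ℝ (Fin n))} (hne : Ω.Nonempty)
    {ρ : EuclideanSpace ℝ (Fin n) → ℝ} {v : EuclideanSpace ℝ (Fin n)} {B : ℝ}
    (h : ∀ u ∈ Ω, ρ u * ⟪u, v⟫ ≤ B) : suppFn (sphHull Ω ρ) v ≤ B := by
  obtain ⟨u, hu⟩ := hne
  refine csSup_le ⟨_, ⟨ρ u • u, subset_convexHull ℝ _ ⟨u, hu, rfl⟩, rfl⟩⟩ ?_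
  rintro _ ⟨x, hx, rfl⟩; exact hull_inner_le h x hx

lemma le_suppFn_hull {Ω : Set (EuclideanSpace ℝ (Fin n))} {ρ : EuclideanSpace ℝ (Fin n) → ℝ}
    {v : EuclideanSpace ℝ (Fin n)} {B : ℝ} (h : ∀ u ∈ Ω, ρ u * ⟪u, v⟫ ≤ B)
    {u : EuclideanSpace ℝ (Fin n)} (hu : u ∈ Ω) :
    ρ u * ⟪u, v⟫ ≤ suppFn (sphHull Ω ρ) v := by
  have hmem : ρ u • u ∈ sphHull Ω ρ := subset_convexHull ℝ _ ⟨u, hu, rfl⟩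
  have hmem2 : (⟪ρ u • u, v⟫ : ℝ) ∈ (fun x => (⟪x, v⟫ : ℝ)) '' sphHull Ω ρ := ⟨_, hmem, rfl⟩
  calc ρ u * ⟪u, v⟫ = ⟪ρ u • u, v⟫ := (real_inner_smul_left u v (ρ u)).symm
    _ ≤ _ := le_csSup ⟨B, by rintro _ ⟨x, hx, rfl⟩; exact hull_inner_le h x hx⟩ hmem2

lemma sphHull_congr {Ω : Set (EuclideanSpace ℝ (Fin n))}
    {ρ ρ' : EuclideanSpace ℝ (Fin n) → ℝ}
    (h : ∀ u ∈ Ω, ρ u = ρ' u) : sphHull Ω ρ = sphHull Ω ρ' := by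
  unfold sphHull
  congr 1
  ext x
  constructor <;> rintro ⟨u, hu, rfl⟩
  · exact ⟨u, hu, by show ρ' u • u = ρ u • u; rw [h u hu]⟩
  · exact ⟨u, hu, by show ρ u • u = ρ' u • u; rw [h u hu]⟩

lemma omega_isCompact {Ω : Set (EuclideanSpace ℝ (Fin n))}
    (h1 : Ω ⊆ unitSphere n) (h2 : IsClosed Ω) : IsCompact Ω :=
  (isCompact_closedBall (0 : EuclideanSpace ℝ (Fin n)) 1).of_isClosed_subset h2
    (h1.trans Metric.sphere_subset_closedBall)

lemma compact_exists_max {α : Type*} [TopologicalSpace α] {s : Set α} {f : α → ℝ}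
    (hs : IsCompact s) (hne : s.Nonempty) (hf : ContinuousOn f s) :
    ∃ x ∈ s, ∀ y ∈ s, f y ≤ f x := by
  obtain ⟨x, hx, h⟩ := hs.exists_isMaxOn hne hf
  exact ⟨x, hx, fun y hy => h hy⟩

lemma compact_exists_min {α : Type*} [TopologicalSpace α] {s : Set α} {f : α → ℝ}
    (hs : IsCompact s) (hne : s.Nonempty) (hf : ContinuousOn f s) :
    ∃ x ∈ s, ∀ y ∈ s, f x ≤ f y := by
  obtain ⟨x, hx, h⟩ := hs.exists_isMinOn hne hf
  exact ⟨x, hx, fun y hy => h hy⟩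

lemma exists_inner_lb {Ω : Set (EuclideanSpace ℝ (Fin n))} (hn : 0 < n) (hΩ : GoodOmega Ω) :
    ∃ a > (0 : ℝ), ∀ v ∈ unitSphere n, ∃ u ∈ Ω, a ≤ ⟪u, v⟫ := by
  obtain ⟨hΩs, hΩc, hΩh⟩ := hΩ
  have hcomp : IsCompact Ω := omega_isCompact hΩs hΩc
  have hne : Ω.Nonempty := by
    have hsph : (EuclideanSpace.single (⟨0, hn⟩ : Fin n) (1 : ℝ)) ∈ unitSphere n := by
      simp [unitSphere, EuclideanSpace.norm_single]
    obtain ⟨u, hu, _⟩ := hΩh _ hsph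
    exact ⟨u, hu⟩
  -- the function q v = sup_{u ∈ Ω} ⟪u, v⟫
  set q : EuclideanSpace ℝ (Fin n) → ℝ :=
    fun v => sSup ((fun u => (⟪u, v⟫ : ℝ)) '' Ω) with hq
  have hnorm1 : ∀ u ∈ Ω, ‖u‖ = 1 := fun u hu => by
    simpa [unitSphere] using hΩs hu
  have hattain : ∀ v : EuclideanSpace ℝ (Fin n), ∃ u ∈ Ω, q v = ⟪u, v⟫ ∧
      ∀ w ∈ Ω, (⟪w, v⟫ : ℝ) ≤ ⟪u, v⟫ := by
    intro v
    obtain ⟨u, hu, hmax⟩ := compact_exists_max hcomp hne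
      ((continuous_id.inner continuous_const).continuousOn)
    refine ⟨u, hu, le_antisymm (csSup_le (hne.image _) ?_) (le_csSup ⟨(⟪u, v⟫ : ℝ), ?_⟩ ⟨u, hu, rfl⟩), hmax⟩
    · rintro _ ⟨w, hw, rfl⟩; exact hmax w hw
    · rintro _ ⟨w, hw, rfl⟩; exact hmax w hw
  have hlip : LipschitzWith 1 q := by
    refine LipschitzWith.of_dist_le_mul fun v w => ?_
    have key : ∀ v w : EuclideanSpace ℝ (Fin n), q v - q w ≤ dist v w := by
      intro v w
      obtain ⟨u, hu, hqv, _⟩ := hattain v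
      obtain ⟨u', hu', hqw, hmax'⟩ := hattain w
      have h1 : (⟪u, v⟫ : ℝ) - ⟪u, w⟫ = ⟪u, v - w⟫ := by
        rw [inner_sub_right]
      have h2 : (⟪u, v - w⟫ : ℝ) ≤ ‖u‖ * ‖v - w‖ := real_inner_le_norm u (v - w)
      have h3 : (⟪u, w⟫ : ℝ) ≤ q w := hqw ▸ hmax' u hu
      have h2' : (⟪u, v - w⟫ : ℝ) ≤ ‖v - w‖ := by
        rw [hnorm1 u hu, one_mul] at h2; exact h2
      rw [hqv, dist_eq_norm]
      linarith
    rw [Real.dist_eq, NNReal.coe_one, one_mul, abs_sub_le_iff]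
    exact ⟨key v w, by simpa [dist_comm] using key w v⟩
  have hsphcomp : IsCompact (unitSphere n) := isCompact_sphere 0 1
  have hsphne : (unitSphere n).Nonempty := by
    refine ⟨EuclideanSpace.single (⟨0, hn⟩ : Fin n) (1 : ℝ), ?_⟩
    simp [unitSphere, EuclideanSpace.norm_single]
  obtain ⟨v₁, hv₁, hminv⟩ := compact_exists_min hsphcomp hsphne hlip.continuous.continuousOn
  have hqpos : 0 < q v₁ := by
    have hneg : (-v₁) ∈ unitSphere n := by
      simp only [unitSphere, mem_sphere_iff_norm, sub_zero] at hv₁ ⊢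
      simpa using hv₁
    obtain ⟨u, hu, hlt⟩ := hΩh _ hneg
    have : (0 : ℝ) < ⟪u, v₁⟫ := by
      have := hlt
      rw [inner_neg_left] at this
      rw [real_inner_comm]; linarith
    obtain ⟨u', hu', hqv, hmax⟩ := hattain v₁
    rw [hqv]
    exact lt_of_lt_of_le this (hmax u hu)
  refine ⟨q v₁, hqpos, fun v hv => ?_⟩
  obtain ⟨u, hu, hqv, _⟩ := hattain v
  exact ⟨u, hu, hqv ▸ hminv v hv⟩

lemma exp_sub_one_le {x : ℝ} (hx : 0 ≤ x) : Real.exp x - 1 ≤ x * Real.exp x := by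
  have h1 : -x + 1 ≤ Real.exp (-x) := Real.add_one_le_exp (-x)
  have h2 : Real.exp (-x) * Real.exp x = 1 := by
    rw [← Real.exp_add]; simp
  nlinarith [Real.exp_pos x, Real.exp_pos (-x)]

lemma abs_diff_le_aux {F0 Ft hi e : ℝ} (h1 : Ft ≤ F0 * e) (h2 : F0 ≤ Ft * e)
    (h3 : F0 ≤ hi) (h4 : Ft ≤ hi) (he : 1 ≤ e) (hhi : 0 ≤ hi) : |Ft - F0| ≤ hi * (e - 1) := by
  rw [abs_sub_le_iff]
  constructor <;> nlinarith

lemma exp_est {c t : ℝ} (hc : 0 ≤ c) (ht : |t| ≤ 1) :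
    Real.exp (c * |t|) - 1 ≤ (c * Real.exp c) * |t| := by
  have hx : (0 : ℝ) ≤ c * |t| := mul_nonneg hc (abs_nonneg t)
  have h5 := exp_sub_one_le hx
  have h6 : Real.exp (c * |t|) ≤ Real.exp c :=
    Real.exp_le_exp.mpr (mul_le_of_le_one_right hc ht)
  nlinarith [Real.exp_pos (c * |t|), abs_nonneg t]

lemma lin_aux1 {t gu gu0 ot e abt : ℝ} (h6 : t * (gu - gu0) ≤ abt * e) (h7 : ot ≤ e * abt) :
    t * gu + ot ≤ t * gu0 + 2 * e * abt := by nlinarith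

lemma lin_aux2 {tg c2 e abt : ℝ} (h13 : |tg| ≤ abt * c2) (he : 0 ≤ e * abt) :
    -(2*c2) * abt + c2 * abt ≤ tg + 2 * e * abt := by
  have := neg_abs_le tg; nlinarith

lemma lin_aux3 {D T e a : ℝ} (h1 : D ≤ T + 2 * e * a) (h2 : T - e * a ≤ D)
    (hea : 0 ≤ e * a) : |D - T| ≤ 2 * e * a := by
  rw [abs_le]; constructor <;> nlinarith

lemma lin_aux4 {D gu e t : ℝ} (ht : 0 < |t|) (h : |D - t * gu| ≤ 2 * e * |t|) :
    |D / t - gu| ≤ 2 * e := by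
  have ht0 : t ≠ 0 := by
    intro h0; rw [h0] at ht; simp at ht
  have hid2 : D / t - gu = (D - t * gu) / t := by field_simp
  rw [hid2, abs_div, div_le_iff₀ ht]
  exact h

end Helpers
/-- **Lemma 4.2**. Suppose `ϕ, φ` satisfy A1)–A3), `Ω ⊆ S^{n-1}` is closed and not
contained in any closed hemisphere, `ρ₀ > 0` and `g` are continuous on `Ω`, and
`log ρ_t = log ρ₀ + t·g + o(t,·)` on `Ω`, where `o(t,·)` is continuous and
`o(t,·)/t → 0` uniformly on `Ω`. Then:
(a) for every regular direction `v ∈ S^{n-1}` of `⟨ρ₀⟩` (i.e. the supporting hyperplane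
with outer normal `v` touches `⟨ρ₀⟩` at a unique point `x`),
`(ϕ(h_{⟨ρ_t⟩}(v)⁻¹) − ϕ(h_{⟨ρ₀⟩}(v)⁻¹))/t → φ(h_{⟨ρ₀⟩}(v)⁻¹)·g(x/‖x‖)` as `t → 0`;
(b) there are `δ′, M > 0` with `|ϕ(h_{⟨ρ_t⟩}(v)⁻¹) − ϕ(h_{⟨ρ₀⟩}(v)⁻¹)| ≤ M|t|` for all
`v ∈ S^{n-1}` and `|t| < δ′`. -/
theorem phi_suppFn_hull_variation {n : ℕ} (hn : 0 < n) (ϕ φ : ℝ → ℝ) (hA : CondA ϕ φ)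
    (Ω : Set (EuclideanSpace ℝ (Fin n))) (hΩ : GoodOmega Ω)
    (ρ₀ g : EuclideanSpace ℝ (Fin n) → ℝ)
    (hρ₀c : ContinuousOn ρ₀ Ω) (hρ₀p : ∀ u ∈ Ω, 0 < ρ₀ u) (hgc : ContinuousOn g Ω)
    (δ : ℝ) (hδ : 0 < δ) (o : ℝ → EuclideanSpace ℝ (Fin n) → ℝ)
    (hoc : ∀ t : ℝ, |t| < δ → ContinuousOn (o t) Ω)
    (ho0 : ∀ u ∈ Ω, o 0 u = 0)
    (hou : ∀ ε > (0 : ℝ), ∃ δ' > (0 : ℝ), ∀ t : ℝ, t ≠ 0 → |t| < δ' →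
      ∀ u ∈ Ω, |o t u| ≤ ε * |t|) :
    ((∀ v ∈ unitSphere n, ∀ x : EuclideanSpace ℝ (Fin n),
      (x ∈ sphHull Ω ρ₀ ∧ ⟪x, v⟫ = suppFn (sphHull Ω ρ₀) v) →
      (∀ y : EuclideanSpace ℝ (Fin n),
        (y ∈ sphHull Ω ρ₀ ∧ ⟪y, v⟫ = suppFn (sphHull Ω ρ₀) v) → y = x) →
      Tendsto (fun t : ℝ =>
          (ϕ ((suppFn (sphHull Ω (fun u => ρ₀ u * Real.exp (t * g u + o t u))) v)⁻¹) -
            ϕ ((suppFn (sphHull Ω ρ₀) v)⁻¹)) / t)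
        (𝓝[≠] (0 : ℝ))
        (𝓝 (φ ((suppFn (sphHull Ω ρ₀) v)⁻¹) * g (‖x‖⁻¹ • x)))) ∧
    (∃ δ' > (0 : ℝ), ∃ M > (0 : ℝ), ∀ v ∈ unitSphere n, ∀ t : ℝ, |t| < δ' →
      |ϕ ((suppFn (sphHull Ω (fun u => ρ₀ u * Real.exp (t * g u + o t u))) v)⁻¹) -
        ϕ ((suppFn (sphHull Ω ρ₀) v)⁻¹)| ≤ M * |t|)) := by
  obtain ⟨hΩs, hΩc, hΩh⟩ := hΩ
  obtain ⟨hanti, hϕpos, hϕ0, hϕinf, hderiv, hφpos, hφc⟩ := hA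
  have hcomp : IsCompact Ω := omega_isCompact hΩs hΩc
  obtain ⟨a, ha, hinner⟩ := exists_inner_lb hn ⟨hΩs, hΩc, hΩh⟩
  have hsph : (EuclideanSpace.single (⟨0, hn⟩ : Fin n) (1 : ℝ)) ∈ unitSphere n := by
    simp [unitSphere, EuclideanSpace.norm_single]
  have hne : Ω.Nonempty := by
    obtain ⟨u, hu, _⟩ := hΩh _ hsph
    exact ⟨u, hu⟩
  have hnorm1 : ∀ u ∈ Ω, ‖u‖ = 1 := fun u hu => by simpa [unitSphere] using hΩs hu
  have hCS : ∀ u ∈ Ω, ∀ v ∈ unitSphere n, |⟪u, v⟫| ≤ 1 := by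
    intro u hu v hv
    have h1 := abs_real_inner_le_norm u v
    have hv1 : ‖v‖ = 1 := by simpa [unitSphere] using hv
    rw [hnorm1 u hu, hv1, one_mul] at h1; exact h1
  obtain ⟨um, humΩ, hm⟩ := compact_exists_min hcomp hne hρ₀c
  obtain ⟨uR, huRΩ, hR⟩ := compact_exists_max hcomp hne hρ₀c
  set m : ℝ := ρ₀ um with hmdef
  set R : ℝ := ρ₀ uR with hRdef
  have hmpos : 0 < m := hρ₀p um humΩ
  have hRpos : 0 < R := hρ₀p uR huRΩ
  obtain ⟨uG, huGΩ, hG⟩ := compact_exists_max hcomp hne hgc.abs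
  set C : ℝ := |g uG| + 1 with hCdef
  have hCpos : 0 < C := by positivity
  have hgC : ∀ u ∈ Ω, |g u| ≤ C := fun u hu => le_trans (hG u hu) (by rw [hCdef]; linarith)
  obtain ⟨δ₁, hδ₁, ho1⟩ := hou 1 one_pos
  set C2 : ℝ := C + 1 with hC2def
  have hC2pos : 0 < C2 := by positivity
  have hexpb : ∀ t : ℝ, t ≠ 0 → |t| < δ₁ → ∀ u ∈ Ω, |t * g u + o t u| ≤ C2 * |t| := by
    intro t ht htδ u hu
    have h1 : |t * g u| ≤ |t| * C := by
      rw [abs_mul]; exact mul_le_mul_of_nonneg_left (hgC u hu) (abs_nonneg t)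
    have h2 : |o t u| ≤ 1 * |t| := ho1 t ht htδ u hu
    calc |t * g u + o t u| ≤ |t * g u| + |o t u| := abs_add_le _ _
      _ ≤ |t| * C + 1 * |t| := add_le_add h1 h2
      _ = C2 * |t| := by rw [hC2def]; ring
  have hρtpos : ∀ (t : ℝ), ∀ u ∈ Ω, 0 < ρ₀ u * Real.exp (t * g u + o t u) :=
    fun t u hu => mul_pos (hρ₀p u hu) (Real.exp_pos _)
  have h0bound : ∀ v ∈ unitSphere n, ∀ u ∈ Ω, ρ₀ u * ⟪u, v⟫ ≤ R := by
    intro v hv u hu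
    calc ρ₀ u * ⟪u, v⟫ ≤ ρ₀ u * |⟪u, v⟫| :=
          mul_le_mul_of_nonneg_left (le_abs_self _) (hρ₀p u hu).le
      _ ≤ ρ₀ u * 1 := mul_le_mul_of_nonneg_left (hCS u hu v hv) (hρ₀p u hu).le
      _ = ρ₀ u := mul_one _
      _ ≤ R := hR u hu
  have hF0pos : ∀ v ∈ unitSphere n, m * a ≤ suppFn (sphHull Ω ρ₀) v := by
    intro v hv
    obtain ⟨u₁, hu₁, hau₁⟩ := hinner v hv
    have h1 : m * a ≤ ρ₀ u₁ * ⟪u₁, v⟫ :=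
      mul_le_mul (hm u₁ hu₁) hau₁ ha.le (hρ₀p u₁ hu₁).le
    exact h1.trans (le_suppFn_hull (h0bound v hv) hu₁)
  have hmapos : 0 < m * a := mul_pos hmpos ha
  have hF0le : ∀ v ∈ unitSphere n, suppFn (sphHull Ω ρ₀) v ≤ R :=
    fun v hv => suppFn_hull_le hne (h0bound v hv)
  have htbound : ∀ v ∈ unitSphere n, ∀ t : ℝ, t ≠ 0 → |t| < δ₁ → |t| ≤ 1 → ∀ u ∈ Ω,
      ρ₀ u * Real.exp (t * g u + o t u) * ⟪u, v⟫ ≤ R * Real.exp C2 := by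
    intro v hv t ht htδ ht1 u hu
    have he : Real.exp (t * g u + o t u) ≤ Real.exp C2 := by
      apply Real.exp_le_exp.mpr
      have h3 := hexpb t ht htδ u hu
      have h2 : C2 * |t| ≤ C2 * 1 := mul_le_mul_of_nonneg_left ht1 hC2pos.le
      calc t * g u + o t u ≤ |t * g u + o t u| := le_abs_self _
        _ ≤ C2 * |t| := h3
        _ ≤ C2 := by linarith
    calc ρ₀ u * Real.exp (t * g u + o t u) * ⟪u, v⟫
        ≤ ρ₀ u * Real.exp (t * g u + o t u) * |⟪u, v⟫| :=
          mul_le_mul_of_nonneg_left (le_abs_self _) (hρtpos t u hu).le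
      _ ≤ ρ₀ u * Real.exp (t * g u + o t u) * 1 :=
          mul_le_mul_of_nonneg_left (hCS u hu v hv) (hρtpos t u hu).le
      _ = ρ₀ u * Real.exp (t * g u + o t u) := mul_one _
      _ ≤ R * Real.exp C2 := mul_le_mul (hR u hu) he (Real.exp_pos _).le hRpos.le
  have hFtle : ∀ v ∈ unitSphere n, ∀ t : ℝ, t ≠ 0 → |t| < δ₁ → |t| ≤ 1 →
      suppFn (sphHull Ω (fun u => ρ₀ u * Real.exp (t * g u + o t u))) v ≤ R * Real.exp C2 :=
    fun v hv t ht htδ ht1 => suppFn_hull_le hne (htbound v hv t ht htδ ht1)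
  have hFtpos : ∀ v ∈ unitSphere n, ∀ t : ℝ, t ≠ 0 → |t| < δ₁ → |t| ≤ 1 →
      m * a * Real.exp (-C2) ≤
        suppFn (sphHull Ω (fun u => ρ₀ u * Real.exp (t * g u + o t u))) v := by
    intro v hv t ht htδ ht1
    obtain ⟨u₁, hu₁, hau₁⟩ := hinner v hv
    have hx := (abs_le.mp (le_trans (hexpb t ht htδ u₁ hu₁)
      (mul_le_of_le_one_right hC2pos.le ht1))).1
    have he : Real.exp (-C2) ≤ Real.exp (t * g u₁ + o t u₁) := Real.exp_le_exp.mpr hx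
    have s1 : m * Real.exp (-C2) ≤ ρ₀ u₁ * Real.exp (t * g u₁ + o t u₁) :=
      mul_le_mul (hm u₁ hu₁) he (Real.exp_pos _).le (hρ₀p u₁ hu₁).le
    have s2 : m * Real.exp (-C2) * a ≤ ρ₀ u₁ * Real.exp (t * g u₁ + o t u₁) * ⟪u₁, v⟫ :=
      mul_le_mul s1 hau₁ ha.le (hρtpos t u₁ hu₁).le
    have h1 : m * a * Real.exp (-C2) ≤ ρ₀ u₁ * Real.exp (t * g u₁ + o t u₁) * ⟪u₁, v⟫ := by
      calc m * a * Real.exp (-C2) = m * Real.exp (-C2) * a := by ring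
        _ ≤ _ := s2
    exact h1.trans (le_suppFn_hull (htbound v hv t ht htδ ht1) hu₁)
  have hup : ∀ v ∈ unitSphere n, ∀ t : ℝ, t ≠ 0 → |t| < δ₁ → |t| ≤ 1 →
      suppFn (sphHull Ω (fun u => ρ₀ u * Real.exp (t * g u + o t u))) v
        ≤ suppFn (sphHull Ω ρ₀) v * Real.exp (C2 * |t|) := by
    intro v hv t ht htδ ht1
    apply suppFn_hull_le hne
    intro u hu
    rcases le_or_gt (⟪u, v⟫ : ℝ) 0 with hsig | hsig
    · have h1 : ρ₀ u * Real.exp (t * g u + o t u) * ⟪u, v⟫ ≤ 0 :=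
        mul_nonpos_of_nonneg_of_nonpos (hρtpos t u hu).le hsig
      have h2 : 0 < suppFn (sphHull Ω ρ₀) v * Real.exp (C2 * |t|) :=
        mul_pos (lt_of_lt_of_le hmapos (hF0pos v hv)) (Real.exp_pos _)
      linarith
    · have h1 : ρ₀ u * ⟪u, v⟫ ≤ suppFn (sphHull Ω ρ₀) v := le_suppFn_hull (h0bound v hv) hu
      have he : Real.exp (t * g u + o t u) ≤ Real.exp (C2 * |t|) :=
        Real.exp_le_exp.mpr (le_trans (le_abs_self _) (hexpb t ht htδ u hu))
      calc ρ₀ u * Real.exp (t * g u + o t u) * ⟪u, v⟫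
          = (ρ₀ u * ⟪u, v⟫) * Real.exp (t * g u + o t u) :=
            (mul_right_comm (ρ₀ u) (⟪u, v⟫ : ℝ) (Real.exp (t * g u + o t u))).symm
        _ ≤ suppFn (sphHull Ω ρ₀) v * Real.exp (C2 * |t|) :=
            mul_le_mul h1 he (Real.exp_pos _).le
              (lt_of_lt_of_le hmapos (hF0pos v hv)).le
  have hdown : ∀ v ∈ unitSphere n, ∀ t : ℝ, t ≠ 0 → |t| < δ₁ → |t| ≤ 1 →
      suppFn (sphHull Ω ρ₀) v
        ≤ suppFn (sphHull Ω (fun u => ρ₀ u * Real.exp (t * g u + o t u))) v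
            * Real.exp (C2 * |t|) := by
    intro v hv t ht htδ ht1
    apply suppFn_hull_le hne
    intro u hu
    rcases le_or_gt (⟪u, v⟫ : ℝ) 0 with hsig | hsig
    · have h1 : ρ₀ u * ⟪u, v⟫ ≤ 0 := mul_nonpos_of_nonneg_of_nonpos (hρ₀p u hu).le hsig
      have h2 : 0 < suppFn (sphHull Ω (fun u => ρ₀ u * Real.exp (t * g u + o t u))) v
          * Real.exp (C2 * |t|) :=
        mul_pos (lt_of_lt_of_le (by positivity) (hFtpos v hv t ht htδ ht1)) (Real.exp_pos _)
      linarith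
    · have h1 : ρ₀ u * Real.exp (t * g u + o t u) * ⟪u, v⟫ ≤
          suppFn (sphHull Ω (fun u => ρ₀ u * Real.exp (t * g u + o t u))) v :=
        le_suppFn_hull (htbound v hv t ht htδ ht1) hu
      have he : Real.exp (-(t * g u + o t u)) ≤ Real.exp (C2 * |t|) := by
        apply Real.exp_le_exp.mpr
        have h3 := (abs_le.mp (hexpb t ht htδ u hu)).1
        linarith
      have hid : ρ₀ u * ⟪u, v⟫
          = (ρ₀ u * Real.exp (t * g u + o t u) * ⟪u, v⟫) * Real.exp (-(t * g u + o t u)) := by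
        rw [Real.exp_neg,
          mul_right_comm (ρ₀ u) (Real.exp (t * g u + o t u)) (⟪u, v⟫ : ℝ), mul_assoc,
          mul_inv_cancel₀ (Real.exp_pos (t * g u + o t u)).ne', mul_one]
      rw [hid]
      exact mul_le_mul h1 he (Real.exp_pos _).le
        (lt_of_lt_of_le (by positivity) (hFtpos v hv t ht htδ ht1)).le
  -- uniform two-sided bounds
  set lo : ℝ := m * a * Real.exp (-C2) with hlodef
  set hi : ℝ := R * Real.exp C2 with hhidef
  have hlopos : 0 < lo := by positivity
  have hhipos : 0 < hi := by positivity
  have hlohi : lo ≤ hi := by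
    obtain ⟨u₂, hu₂, hau₂⟩ := hinner _ hsph
    have ha1 : a ≤ 1 := le_trans hau₂ (le_trans (le_abs_self _) (hCS u₂ hu₂ _ hsph))
    have he1 : Real.exp (-C2) ≤ 1 := Real.exp_le_one_iff.mpr (by linarith)
    have he2 : 1 ≤ Real.exp C2 := Real.one_le_exp_iff.mpr hC2pos.le
    have hmR : m ≤ R := hR um humΩ
    nlinarith
  have hF0lo : ∀ v ∈ unitSphere n, lo ≤ suppFn (sphHull Ω ρ₀) v := by
    intro v hv
    have h1 : Real.exp (-C2) ≤ 1 := Real.exp_le_one_iff.mpr (by linarith)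
    have := hF0pos v hv
    nlinarith
  have hF0hi : ∀ v ∈ unitSphere n, suppFn (sphHull Ω ρ₀) v ≤ hi := by
    intro v hv
    have h2 : 1 ≤ Real.exp C2 := Real.one_le_exp_iff.mpr hC2pos.le
    have := hF0le v hv
    nlinarith
  -- Lipschitz constant for ϕ on [hi⁻¹, lo⁻¹]
  set p : ℝ := hi⁻¹ with hpdef
  set q : ℝ := lo⁻¹ with hqdef
  have hppos : 0 < p := by positivity
  have hqpos : 0 < q := by positivity
  have hpq : p ≤ q := by
    rw [hpdef, hqdef]
    exact inv_anti₀ hlopos hlohi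
  obtain ⟨τ, hτmem, hτmax⟩ := compact_exists_max isCompact_Icc (Set.nonempty_Icc.mpr hpq)
    (hφc.mono (fun s hs => lt_of_lt_of_le hppos hs.1))
  set Φ : ℝ := φ τ with hΦdef
  have hΦpos : 0 < Φ := hφpos τ (lt_of_lt_of_le hppos hτmem.1)
  set L : ℝ := Φ / p with hLdef
  have hLpos : 0 < L := by positivity
  have hlip : ∀ x ∈ Set.Icc p q, ∀ y ∈ Set.Icc p q, |ϕ y - ϕ x| ≤ L * |y - x| := by
    intro x hx y hy
    have key := Convex.norm_image_sub_le_of_norm_hasDerivWithin_le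
      (f := ϕ) (f' := fun s => -φ s / s) (s := Set.Icc p q) (C := L)
      (fun s hs => (hderiv s (lt_of_lt_of_le hppos hs.1)).hasDerivWithinAt)
      (fun s hs => ?_) (convex_Icc p q) hx hy
    · simpa [Real.norm_eq_abs] using key
    · have hspos : 0 < s := lt_of_lt_of_le hppos hs.1
      have : ‖-φ s / s‖ = φ s / s := by
        rw [Real.norm_eq_abs, abs_div, abs_neg, abs_of_pos (hφpos s hspos), abs_of_pos hspos]
      rw [this, hLdef]
      exact div_le_div₀ hΦpos.le (hτmax s hs) hppos hs.1
  -- membership of inverses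
  have hinvmem : ∀ F : ℝ, lo ≤ F → F ≤ hi → F⁻¹ ∈ Set.Icc p q := by
    intro F h1 h2
    have hFpos : 0 < F := lt_of_lt_of_le hlopos h1
    exact ⟨inv_anti₀ hFpos h2, inv_anti₀ hlopos h1⟩
  clear_value m R C C2 lo hi Φ L p q
  constructor
  · -- part (a)
    intro v hv x hxx hxuniq
    obtain ⟨hxmem, hxsupp⟩ := hxx
    have hF0v : 0 < suppFn (sphHull Ω ρ₀) v := lt_of_lt_of_le hmapos (hF0pos v hv)
    obtain ⟨u₀, hu₀Ω, hmax⟩ := compact_exists_max hcomp hne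
      (hρ₀c.mul ((continuous_id.inner continuous_const).continuousOn))
    have hFeq : suppFn (sphHull Ω ρ₀) v = ρ₀ u₀ * ⟪u₀, v⟫ :=
      le_antisymm (suppFn_hull_le hne hmax) (le_suppFn_hull hmax hu₀Ω)
    have hxy : x = ρ₀ u₀ • u₀ :=
      (hxuniq (ρ₀ u₀ • u₀) ⟨subset_convexHull ℝ _ ⟨u₀, hu₀Ω, rfl⟩,
        by rw [real_inner_smul_left]; exact hFeq.symm⟩).symm
    have hxnorm : ‖x‖ = ρ₀ u₀ := by
      rw [hxy, norm_smul, hnorm1 u₀ hu₀Ω, mul_one, Real.norm_eq_abs,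
        abs_of_pos (hρ₀p u₀ hu₀Ω)]
    have hxdir : ‖x‖⁻¹ • x = u₀ := by
      rw [hxnorm, hxy, smul_smul, inv_mul_cancel₀ (hρ₀p u₀ hu₀Ω).ne', one_smul]
    rw [hxdir]
    have huniq0 : ∀ u ∈ Ω, ρ₀ u * ⟪u, v⟫ = suppFn (sphHull Ω ρ₀) v → u = u₀ := by
      intro u hu heq
      have hy := hxuniq (ρ₀ u • u)
        ⟨subset_convexHull ℝ _ ⟨u, hu, rfl⟩, by rw [real_inner_smul_left]; exact heq⟩
      have h2 : ρ₀ u • u = ρ₀ u₀ • u₀ := hy.trans hxy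
      have h3 : ρ₀ u = ρ₀ u₀ := by
        have h4 := congrArg norm h2
        rwa [norm_smul, norm_smul, hnorm1 u hu, hnorm1 u₀ hu₀Ω, mul_one, mul_one,
          Real.norm_eq_abs, Real.norm_eq_abs, abs_of_pos (hρ₀p u hu),
          abs_of_pos (hρ₀p u₀ hu₀Ω)] at h4
      have h5 : ρ₀ u • u = ρ₀ u • u₀ := by rw [h2, h3]
      exact smul_right_injective (EuclideanSpace ℝ (Fin n)) (hρ₀p u hu).ne' h5
    have hcongr0 : sphHull Ω (fun u => ρ₀ u * Real.exp ((0 : ℝ) * g u + o 0 u))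
        = sphHull Ω ρ₀ := sphHull_congr (fun u hu => by simp [ho0 u hu])
    -- derivative of the log of the support function
    have hHd : HasDerivAt (fun t : ℝ =>
        Real.log (suppFn (sphHull Ω (fun u => ρ₀ u * Real.exp (t * g u + o t u))) v))
        (g u₀) 0 := by
      rw [hasDerivAt_iff_tendsto_slope, Metric.tendsto_nhdsWithin_nhds]
      intro ε hε
      have hcw : ContinuousWithinAt g Ω u₀ := hgc u₀ hu₀Ω
      rw [Metric.continuousWithinAt_iff] at hcw
      obtain ⟨r, hr, hrg⟩ := hcw (ε/3) (by linarith)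
      obtain ⟨M', hM'0, hM'lt, hM'bound⟩ : ∃ M' : ℝ, 0 ≤ M' ∧
          M' < suppFn (sphHull Ω ρ₀) v ∧
          ∀ u ∈ Ω, r ≤ dist u u₀ → ρ₀ u * ⟪u, v⟫ ≤ M' := by
        rcases (Ω ∩ {u | r ≤ dist u u₀}).eq_empty_or_nonempty with hempty | hK'ne
        · refine ⟨0, le_refl 0, hF0v, fun u hu hru => ?_⟩
          exact absurd (Set.mem_inter hu hru) (by rw [hempty]; exact Set.notMem_empty u)
        · have hK'comp : IsCompact (Ω ∩ {u | r ≤ dist u u₀}) :=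
            hcomp.inter_right (isClosed_le continuous_const
              (continuous_id.dist continuous_const))
          obtain ⟨u₂, hu₂, hmax₂⟩ := compact_exists_max hK'comp hK'ne
            ((hρ₀c.mono Set.inter_subset_left).mul
              ((continuous_id.inner continuous_const).continuousOn))
          refine ⟨max (ρ₀ u₂ * ⟪u₂, v⟫) 0, le_max_right _ _, ?_, ?_⟩
          · refine max_lt ?_ hF0v
            refine lt_of_le_of_ne (by rw [hFeq]; exact hmax u₂ hu₂.1) ?_
            intro heq
            have hueq := huniq0 u₂ hu₂.1 heq
            have hd := hu₂.2
            rw [Set.mem_setOf_eq, hueq, dist_self] at hd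
            linarith
          · intro u hu hru
            exact le_max_of_le_left (hmax₂ u ⟨hu, hru⟩)
      have htend : Tendsto (fun s : ℝ => suppFn (sphHull Ω ρ₀) v * Real.exp (-(2*C2) * s))
          (𝓝 0) (𝓝 (suppFn (sphHull Ω ρ₀) v)) := by
        have hcont2 : Continuous fun s : ℝ =>
            suppFn (sphHull Ω ρ₀) v * Real.exp (-(2*C2) * s) :=
          continuous_const.mul (Real.continuous_exp.comp (continuous_const.mul continuous_id))
        have h0 := hcont2.tendsto 0
        simpa using h0
      have hev := htend.eventually (eventually_gt_nhds hM'lt)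
      rw [Metric.eventually_nhds_iff] at hev
      obtain ⟨δ₄, hδ₄, hδ₄p⟩ := hev
      obtain ⟨δ₂, hδ₂, ho2⟩ := hou (ε/3) (by linarith)
      refine ⟨min (min δ₁ δ₂) (min δ₄ 1), lt_min (lt_min hδ₁ hδ₂) (lt_min hδ₄ one_pos), ?_⟩
      intro t htne htd
      have ht0 : t ≠ 0 := htne
      rw [Real.dist_eq, sub_zero] at htd
      have htδ₁ : |t| < δ₁ := lt_of_lt_of_le htd (le_trans (min_le_left _ _) (min_le_left _ _))
      have htδ₂ : |t| < δ₂ := lt_of_lt_of_le htd (le_trans (min_le_left _ _) (min_le_right _ _))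
      have htδ₄ : |t| < δ₄ := lt_of_lt_of_le htd (le_trans (min_le_right _ _) (min_le_left _ _))
      have ht1 : |t| ≤ 1 :=
        le_of_lt (lt_of_lt_of_le htd (le_trans (min_le_right _ _) (min_le_right _ _)))
      have htpos : 0 < |t| := abs_pos.mpr ht0
      have hε3 : 0 < ε / 3 := by linarith
      -- upper bound on F_t
      have hupε : suppFn (sphHull Ω (fun u => ρ₀ u * Real.exp (t * g u + o t u))) v
          ≤ suppFn (sphHull Ω ρ₀) v * Real.exp (t * g u₀ + 2 * (ε/3) * |t|) := by
        apply suppFn_hull_le hne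
        intro u hu
        rcases le_or_gt (⟪u, v⟫ : ℝ) 0 with hsig | hsig
        · have hL : ρ₀ u * Real.exp (t * g u + o t u) * ⟪u, v⟫ ≤ 0 :=
            mul_nonpos_of_nonneg_of_nonpos (hρtpos t u hu).le hsig
          have hR' : 0 < suppFn (sphHull Ω ρ₀) v * Real.exp (t * g u₀ + 2 * (ε/3) * |t|) :=
            mul_pos hF0v (Real.exp_pos _)
          linarith
        · by_cases hdist : dist u u₀ < r
          · have hgu : |g u - g u₀| ≤ ε / 3 := by
              have h6 := hrg hu hdist
              rw [Real.dist_eq] at h6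
              exact le_of_lt h6
            have hexple : t * g u + o t u ≤ t * g u₀ + 2 * (ε/3) * |t| := by
              have h6 : t * (g u - g u₀) ≤ |t| * (ε/3) := by
                calc t * (g u - g u₀) ≤ |t * (g u - g u₀)| := le_abs_self _
                  _ = |t| * |g u - g u₀| := abs_mul _ _
                  _ ≤ |t| * (ε/3) := mul_le_mul_of_nonneg_left hgu (abs_nonneg t)
              have h7 : o t u ≤ (ε/3) * |t| := le_trans (le_abs_self _) (ho2 t ht0 htδ₂ u hu)
              exact lin_aux1 h6 h7
            have h8 : ρ₀ u * ⟪u, v⟫ ≤ suppFn (sphHull Ω ρ₀) v :=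
              le_suppFn_hull (h0bound v hv) hu
            calc ρ₀ u * Real.exp (t * g u + o t u) * ⟪u, v⟫
                = (ρ₀ u * ⟪u, v⟫) * Real.exp (t * g u + o t u) :=
                  (mul_right_comm (ρ₀ u) (⟪u, v⟫ : ℝ) (Real.exp (t * g u + o t u))).symm
              _ ≤ suppFn (sphHull Ω ρ₀) v * Real.exp (t * g u₀ + 2 * (ε/3) * |t|) :=
                  mul_le_mul h8 (Real.exp_le_exp.mpr hexple) (Real.exp_pos _).le hF0v.le
          · push_neg at hdist
            have h9 : ρ₀ u * ⟪u, v⟫ ≤ M' := hM'bound u hu hdist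
            have h10 : Real.exp (t * g u + o t u) ≤ Real.exp (C2 * |t|) :=
              Real.exp_le_exp.mpr (le_trans (le_abs_self _) (hexpb t ht0 htδ₁ u hu))
            have h11 : M' < suppFn (sphHull Ω ρ₀) v * Real.exp (-(2*C2) * |t|) :=
              hδ₄p (by rw [Real.dist_eq, sub_zero, abs_abs]; exact htδ₄)
            have h12 : -(2*C2) * |t| + C2 * |t| ≤ t * g u₀ + 2 * (ε/3) * |t| := by
              have h13 : |t * g u₀| ≤ |t| * C2 := by
                rw [abs_mul]
                refine mul_le_mul_of_nonneg_left ?_ (abs_nonneg t)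
                exact le_trans (hgC u₀ hu₀Ω) (by linarith)
              exact lin_aux2 h13 (mul_nonneg (le_of_lt hε3) (abs_nonneg t))
            calc ρ₀ u * Real.exp (t * g u + o t u) * ⟪u, v⟫
                = (ρ₀ u * ⟪u, v⟫) * Real.exp (t * g u + o t u) :=
                  (mul_right_comm (ρ₀ u) (⟪u, v⟫ : ℝ) (Real.exp (t * g u + o t u))).symm
              _ ≤ M' * Real.exp (C2 * |t|) :=
                  mul_le_mul h9 h10 (Real.exp_pos _).le hM'0
              _ ≤ (suppFn (sphHull Ω ρ₀) v * Real.exp (-(2*C2) * |t|)) * Real.exp (C2 * |t|) :=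
                  mul_le_mul_of_nonneg_right h11.le (Real.exp_pos _).le
              _ = suppFn (sphHull Ω ρ₀) v * Real.exp (-(2*C2) * |t| + C2 * |t|) := by
                  rw [mul_assoc, ← Real.exp_add]
              _ ≤ suppFn (sphHull Ω ρ₀) v * Real.exp (t * g u₀ + 2 * (ε/3) * |t|) :=
                  mul_le_mul_of_nonneg_left (Real.exp_le_exp.mpr h12) hF0v.le
      -- lower bound on F_t
      have hdownε : suppFn (sphHull Ω ρ₀) v * Real.exp (t * g u₀ - (ε/3) * |t|)
          ≤ suppFn (sphHull Ω (fun u => ρ₀ u * Real.exp (t * g u + o t u))) v := by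
        have h15 : Real.exp (t * g u₀ - (ε/3) * |t|) ≤ Real.exp (t * g u₀ + o t u₀) := by
          apply Real.exp_le_exp.mpr
          have h16 := (abs_le.mp (ho2 t ht0 htδ₂ u₀ hu₀Ω)).1
          linarith
        have h17 : ρ₀ u₀ * Real.exp (t * g u₀ + o t u₀) * ⟪u₀, v⟫ ≤
            suppFn (sphHull Ω (fun u => ρ₀ u * Real.exp (t * g u + o t u))) v :=
          le_suppFn_hull (htbound v hv t ht0 htδ₁ ht1) hu₀Ω
        have h18 : 0 ≤ ρ₀ u₀ * ⟪u₀, v⟫ := by rw [← hFeq]; exact hF0v.le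
        calc suppFn (sphHull Ω ρ₀) v * Real.exp (t * g u₀ - (ε/3) * |t|)
            = (ρ₀ u₀ * ⟪u₀, v⟫) * Real.exp (t * g u₀ - (ε/3) * |t|) := by rw [← hFeq]
          _ ≤ (ρ₀ u₀ * ⟪u₀, v⟫) * Real.exp (t * g u₀ + o t u₀) :=
              mul_le_mul_of_nonneg_left h15 h18
          _ = ρ₀ u₀ * Real.exp (t * g u₀ + o t u₀) * ⟪u₀, v⟫ :=
              mul_right_comm (ρ₀ u₀) (⟪u₀, v⟫ : ℝ) (Real.exp (t * g u₀ + o t u₀))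
          _ ≤ _ := h17
      have hFtp : 0 < suppFn (sphHull Ω (fun u => ρ₀ u * Real.exp (t * g u + o t u))) v :=
        lt_of_lt_of_le (mul_pos hF0v (Real.exp_pos _)) hdownε
      -- logs
      have hlog1 : Real.log (suppFn (sphHull Ω (fun u => ρ₀ u * Real.exp (t * g u + o t u))) v)
          ≤ Real.log (suppFn (sphHull Ω ρ₀) v) + (t * g u₀ + 2 * (ε/3) * |t|) := by
        have h19 := Real.log_le_log hFtp hupε
        rwa [Real.log_mul hF0v.ne' (Real.exp_pos _).ne', Real.log_exp] at h19
      have hlog2 : Real.log (suppFn (sphHull Ω ρ₀) v) + (t * g u₀ - (ε/3) * |t|)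
          ≤ Real.log (suppFn (sphHull Ω (fun u => ρ₀ u * Real.exp (t * g u + o t u))) v) := by
        have h20 := Real.log_le_log (mul_pos hF0v (Real.exp_pos _)) hdownε
        rwa [Real.log_mul hF0v.ne' (Real.exp_pos _).ne', Real.log_exp] at h20
      -- assemble slope estimate
      have hslope : slope (fun s : ℝ =>
          Real.log (suppFn (sphHull Ω (fun u => ρ₀ u * Real.exp (s * g u + o s u))) v)) 0 t
          = (Real.log (suppFn (sphHull Ω (fun u => ρ₀ u * Real.exp (t * g u + o t u))) v)
              - Real.log (suppFn (sphHull Ω ρ₀) v)) / t := by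
        rw [slope_def_field, sub_zero]
        congr 2
        rw [hcongr0]
      rw [hslope, Real.dist_eq]
      set D : ℝ := Real.log (suppFn (sphHull Ω (fun u => ρ₀ u * Real.exp (t * g u + o t u))) v)
        - Real.log (suppFn (sphHull Ω ρ₀) v) with hDdef
      clear_value D
      have h1' : D ≤ t * g u₀ + 2 * (ε/3) * |t| := by rw [hDdef]; linarith [hlog1]
      have h2' : t * g u₀ - (ε/3) * |t| ≤ D := by rw [hDdef]; linarith [hlog2]
      have habsD : |D - t * g u₀| ≤ 2 * (ε/3) * |t| :=
        lin_aux3 h1' h2' (mul_nonneg hε3.le (abs_nonneg t))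
      have hfin : |D / t - g u₀| ≤ 2 * (ε/3) := lin_aux4 htpos habsD
      linarith [hfin]
    -- chain rule with ψ(s) = ϕ(exp(-s))
    have hs₀pos : 0 < (suppFn (sphHull Ω ρ₀) v)⁻¹ := inv_pos.mpr hF0v
    have hexpval : Real.exp (-(Real.log (suppFn (sphHull Ω ρ₀) v)))
        = (suppFn (sphHull Ω ρ₀) v)⁻¹ := by
      rw [Real.exp_neg, Real.exp_log hF0v]
    have hψ : HasDerivAt (fun s : ℝ => ϕ (Real.exp (-s)))
        (φ ((suppFn (sphHull Ω ρ₀) v)⁻¹)) (Real.log (suppFn (sphHull Ω ρ₀) v)) := by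
      have h1 : HasDerivAt (fun s : ℝ => Real.exp (-s))
          (-(suppFn (sphHull Ω ρ₀) v)⁻¹) (Real.log (suppFn (sphHull Ω ρ₀) v)) := by
        have h2 := (Real.hasDerivAt_exp (-(Real.log (suppFn (sphHull Ω ρ₀) v)))).comp
          (Real.log (suppFn (sphHull Ω ρ₀) v))
          ((hasDerivAt_id (Real.log (suppFn (sphHull Ω ρ₀) v))).neg)
        have h2' : HasDerivAt (fun s : ℝ => Real.exp (-s))
            (Real.exp (-(Real.log (suppFn (sphHull Ω ρ₀) v))) * (-1))
            (Real.log (suppFn (sphHull Ω ρ₀) v)) := h2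
        rw [hexpval] at h2'
        convert h2' using 1
        ring
      have h3 : HasDerivAt ϕ
          (-φ ((suppFn (sphHull Ω ρ₀) v)⁻¹) / (suppFn (sphHull Ω ρ₀) v)⁻¹)
          (Real.exp (-(Real.log (suppFn (sphHull Ω ρ₀) v)))) := by
        rw [hexpval]; exact hderiv _ hs₀pos
      have h4 := HasDerivAt.comp (Real.log (suppFn (sphHull Ω ρ₀) v)) h3 h1
      have h5 : -φ ((suppFn (sphHull Ω ρ₀) v)⁻¹) / (suppFn (sphHull Ω ρ₀) v)⁻¹
          * -(suppFn (sphHull Ω ρ₀) v)⁻¹ = φ ((suppFn (sphHull Ω ρ₀) v)⁻¹) := by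
        field_simp
      rw [h5] at h4
      exact h4
    have hψ0 : HasDerivAt (fun s : ℝ => ϕ (Real.exp (-s)))
        (φ ((suppFn (sphHull Ω ρ₀) v)⁻¹))
        (Real.log (suppFn (sphHull Ω (fun u => ρ₀ u * Real.exp ((0:ℝ) * g u + o 0 u))) v)) := by
      rw [hcongr0]; exact hψ
    have hchain := HasDerivAt.comp (0 : ℝ) hψ0 hHd
    have hchain' : HasDerivAt (fun t : ℝ => ϕ (Real.exp
        (-(Real.log (suppFn (sphHull Ω (fun u => ρ₀ u * Real.exp (t * g u + o t u))) v)))))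
        (φ ((suppFn (sphHull Ω ρ₀) v)⁻¹) * g u₀) 0 := hchain
    have hev2 : (fun t : ℝ =>
        ϕ ((suppFn (sphHull Ω (fun u => ρ₀ u * Real.exp (t * g u + o t u))) v)⁻¹))
        =ᶠ[𝓝 (0:ℝ)] (fun t : ℝ => ϕ (Real.exp
          (-(Real.log (suppFn (sphHull Ω (fun u => ρ₀ u * Real.exp (t * g u + o t u))) v))))) := by
      have hball : Metric.ball (0:ℝ) (min δ₁ 1) ∈ 𝓝 (0:ℝ) :=
        Metric.ball_mem_nhds _ (lt_min hδ₁ one_pos)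
      refine Filter.eventuallyEq_of_mem hball ?_
      intro t htb
      have hFt : 0 < suppFn (sphHull Ω (fun u => ρ₀ u * Real.exp (t * g u + o t u))) v := by
        rcases eq_or_ne t 0 with rfl | ht0
        · rw [hcongr0]; exact hF0v
        · have habs : |t| < min δ₁ 1 := by
            have := htb
            rw [Metric.mem_ball, Real.dist_eq, sub_zero] at this
            exact this
          exact lt_of_lt_of_le hlopos (hFtpos v hv t ht0
            (lt_of_lt_of_le habs (min_le_left _ _))
            (le_of_lt (lt_of_lt_of_le habs (min_le_right _ _))))
      show ϕ ((suppFn (sphHull Ω (fun u => ρ₀ u * Real.exp (t * g u + o t u))) v)⁻¹)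
        = ϕ (Real.exp (-(Real.log (suppFn (sphHull Ω
            (fun u => ρ₀ u * Real.exp (t * g u + o t u))) v))))
      rw [Real.exp_neg, Real.exp_log hFt]
    have hAd : HasDerivAt (fun t : ℝ =>
        ϕ ((suppFn (sphHull Ω (fun u => ρ₀ u * Real.exp (t * g u + o t u))) v)⁻¹))
        (φ ((suppFn (sphHull Ω ρ₀) v)⁻¹) * g u₀) 0 :=
      hchain'.congr_of_eventuallyEq hev2
    have hslopeT := hasDerivAt_iff_tendsto_slope.mp hAd
    refine hslopeT.congr fun t => ?_
    rw [slope_def_field, sub_zero]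
    show (ϕ ((suppFn (sphHull Ω (fun u => ρ₀ u * Real.exp (t * g u + o t u))) v)⁻¹)
        - ϕ ((suppFn (sphHull Ω (fun u => ρ₀ u * Real.exp ((0:ℝ) * g u + o 0 u))) v)⁻¹)) / t
      = (ϕ ((suppFn (sphHull Ω (fun u => ρ₀ u * Real.exp (t * g u + o t u))) v)⁻¹)
        - ϕ ((suppFn (sphHull Ω ρ₀) v)⁻¹)) / t
    rw [hcongr0]
  · -- part (b)
    have hMpos : 0 < L * q * q * hi * C2 * Real.exp C2 + 1 := by
      have h0 : 0 < L * q * q * hi * C2 * Real.exp C2 :=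
        mul_pos (mul_pos (mul_pos (mul_pos (mul_pos hLpos hqpos) hqpos) hhipos) hC2pos)
          (Real.exp_pos _)
      linarith
    refine ⟨min δ₁ 1, by positivity, L * q * q * hi * C2 * Real.exp C2 + 1, hMpos, ?_⟩
    intro v hv t htδ'
    rcases eq_or_ne t 0 with rfl | ht0
    · have hcongr : sphHull Ω (fun u => ρ₀ u * Real.exp ((0 : ℝ) * g u + o 0 u)) = sphHull Ω ρ₀ :=
        sphHull_congr (fun u hu => by simp [ho0 u hu])
      rw [hcongr]
      simp
    · have htδ₁ : |t| < δ₁ := lt_of_lt_of_le htδ' (min_le_left _ _)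
      have ht1 : |t| ≤ 1 := le_of_lt (lt_of_lt_of_le htδ' (min_le_right _ _))
      have hF0l : lo ≤ suppFn (sphHull Ω ρ₀) v := hF0lo v hv
      have hF0h : suppFn (sphHull Ω ρ₀) v ≤ hi := hF0hi v hv
      have hFtl : lo ≤ suppFn (sphHull Ω (fun u => ρ₀ u * Real.exp (t * g u + o t u))) v :=
        hFtpos v hv t ht0 htδ₁ ht1
      have hFth : suppFn (sphHull Ω (fun u => ρ₀ u * Real.exp (t * g u + o t u))) v ≤ hi :=
        hFtle v hv t ht0 htδ₁ ht1
      have hu1 := hup v hv t ht0 htδ₁ ht1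
      have hd1 := hdown v hv t ht0 htδ₁ ht1
      set F0 : ℝ := suppFn (sphHull Ω ρ₀) v with hF0def
      set Ft : ℝ := suppFn (sphHull Ω (fun u => ρ₀ u * Real.exp (t * g u + o t u))) v with hFtdef
      clear_value F0 Ft
      have hF0p : 0 < F0 := lt_of_lt_of_le hlopos hF0l
      have hFtp : 0 < Ft := lt_of_lt_of_le hlopos hFtl
      have h1 : |ϕ Ft⁻¹ - ϕ F0⁻¹| ≤ L * |Ft⁻¹ - F0⁻¹| :=
        hlip _ (hinvmem F0 hF0l hF0h) _ (hinvmem Ft hFtl hFth)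
      have h2 : |Ft⁻¹ - F0⁻¹| ≤ q * q * |Ft - F0| := by
        have hid : Ft⁻¹ - F0⁻¹ = (F0 - Ft) * (Ft⁻¹ * F0⁻¹) := by
          field_simp
        rw [hid, abs_mul, abs_sub_comm F0 Ft]
        have hFtinv : Ft⁻¹ ≤ q := (hinvmem Ft hFtl hFth).2
        have hF0inv : F0⁻¹ ≤ q := (hinvmem F0 hF0l hF0h).2
        have habs : |Ft⁻¹ * F0⁻¹| ≤ q * q := by
          rw [abs_mul, abs_of_pos (inv_pos.mpr hFtp), abs_of_pos (inv_pos.mpr hF0p)]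
          exact mul_le_mul hFtinv hF0inv (inv_pos.mpr hF0p).le hqpos.le
        calc |Ft - F0| * |Ft⁻¹ * F0⁻¹| ≤ |Ft - F0| * (q * q) :=
              mul_le_mul_of_nonneg_left habs (abs_nonneg _)
          _ = q * q * |Ft - F0| := by ring
      have hexpge : 1 ≤ Real.exp (C2 * |t|) :=
        Real.one_le_exp_iff.mpr (mul_nonneg hC2pos.le (abs_nonneg t))
      have h3 : |Ft - F0| ≤ hi * (Real.exp (C2 * |t|) - 1) :=
        abs_diff_le_aux hu1 hd1 hF0h hFth hexpge hhipos.le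
      have h4 : Real.exp (C2 * |t|) - 1 ≤ (C2 * Real.exp C2) * |t| :=
        exp_est hC2pos.le ht1
      have h34 : |Ft - F0| ≤ hi * ((C2 * Real.exp C2) * |t|) :=
        le_trans h3 (mul_le_mul_of_nonneg_left h4 hhipos.le)
      have hqq : (0 : ℝ) ≤ q * q := mul_nonneg hqpos.le hqpos.le
      calc |ϕ Ft⁻¹ - ϕ F0⁻¹| ≤ L * |Ft⁻¹ - F0⁻¹| := h1
        _ ≤ L * (q * q * |Ft - F0|) := mul_le_mul_of_nonneg_left h2 hLpos.le
        _ ≤ L * (q * q * (hi * ((C2 * Real.exp C2) * |t|))) :=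
            mul_le_mul_of_nonneg_left (mul_le_mul_of_nonneg_left h34 hqq) hLpos.le
        _ = L * q * q * hi * C2 * Real.exp C2 * |t| := by ring
        _ ≤ (L * q * q * hi * C2 * Real.exp C2 + 1) * |t| :=
            mul_le_mul_of_nonneg_right (by linarith) (abs_nonneg t)
end
end

section
/- Let ϕ : (0,∞) → (0,∞) be strictly decreasing with lim_{t→0⁺} ϕ(t) = ∞ and lim_{t→∞} ϕ(t) = 0, and let c > 0. If {Q_i}_{i=1}^∞ ⊆ 𝒦₀ⁿ is a sequence of convex bodies with Ṽ_ϕ(Q_i) = c for all i, then there exists a constant R > 0 such that Q_i* ⊆ R·B₂ⁿ for all i, where Q_i* is the polar body of Q_i and B₂ⁿ is the Euclidean unit ball. -/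
open MeasureTheory Metric Set Filter
open scoped ENNReal NNReal Topology RealInnerProductSpace

noncomputable section

/-!
If `x ∈ K*` and `‖x‖` is large, then `⟪x, y⟫ ≤ 1` on `K` forces `ρ_K ≤ 2 / ‖x‖` on the cap of
unit vectors `v` with `⟪x / ‖x‖, v⟫ ≥ 1/2`. Since `ϕ` is decreasing and positive,
`n Ṽ_ϕ(K) ≥ ϕ(2 / ‖x‖) · σ(cap)`, and the Hausdorff measure of such a cap is bounded below
independently of its direction (it projects onto a ball of fixed radius in `x^⊥`). As
`ϕ(0⁺) = ∞`, `Ṽ_ϕ(Q_i) = c` therefore bounds `‖x‖` uniformly in `i`.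
-/

local notation "𝔼" n:max => EuclideanSpace ℝ (Fin n)

section SphericalCap

variable {n : ℕ}

def sphericalCap (u : 𝔼 n) : Set (𝔼 n) :=
  unitSphere n ∩ {v | 1 / 2 ≤ ⟪u, v⟫}

lemma isClosed_sphericalCap (u : 𝔼 n) : IsClosed (sphericalCap u) :=
  isClosed_sphere.inter (isClosed_le continuous_const (continuous_const.inner continuous_id))

lemma sqrt_smul_add_mem_sphericalCap {u w : 𝔼 n} (hu : ‖u‖ = 1) (huw : ⟪u, w⟫ = 0)
    (hw : ‖w‖ ^ 2 ≤ 3 / 4) : √(1 - ‖w‖ ^ 2) • u + w ∈ sphericalCap u := by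
  set t := √(1 - ‖w‖ ^ 2)
  have ht : t ^ 2 = 1 - ‖w‖ ^ 2 := Real.sq_sqrt (by linarith)
  have ht_half : 1 / 2 ≤ t := Real.le_sqrt_of_sq_le (by linarith)
  refine ⟨?_, ?_⟩
  · have hsq : ‖t • u + w‖ ^ 2 = 1 := by
      rw [norm_add_sq_real, norm_smul, real_inner_smul_left, huw, hu, Real.norm_eq_abs,
        mul_one, sq_abs, ht]
      ring
    rw [unitSphere, mem_sphere_zero_iff_norm]
    nlinarith [norm_nonneg (t • u + w)]
  · show 1 / 2 ≤ ⟪u, t • u + w⟫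
    rwa [inner_add_right, real_inner_smul_right, huw, real_inner_self_eq_norm_sq, hu, one_pow,
      mul_one, add_zero]

lemma exists_lipschitzWith_closedBall_subset_image_sphericalCap (hn : 0 < n) {u : 𝔼 n}
    (hu : ‖u‖ = 1) :
    ∃ F : (𝔼 n) → (Fin (n - 1) → ℝ), LipschitzWith 1 F ∧
      closedBall 0 (2 * n : ℝ)⁻¹ ⊆ F '' sphericalCap u := by
  have hW : Module.finrank ℝ (ℝ ∙ u)ᗮ = n - 1 := by
    have h := (ℝ ∙ u).finrank_add_finrank_orthogonal
    rw [finrank_span_singleton (norm_ne_zero_iff.mp (by simp [hu])),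
      finrank_euclideanSpace_fin] at h
    omega
  set W := (ℝ ∙ u)ᗮ
  let b : OrthonormalBasis (Fin (n - 1)) ℝ W := (stdOrthonormalBasis ℝ W).reindex (finCongr hW)
  have hP : LipschitzWith 1 fun v : 𝔼 n => W.orthogonalProjectionOnto v :=
    W.lipschitzWith_orthogonalProjectionOnto
  refine ⟨fun v => WithLp.ofLp (b.repr (W.orthogonalProjectionOnto v)), by
    simpa [Function.comp_def] using
      (PiLp.lipschitzWith_ofLp 2 _).comp (b.repr.lipschitz.comp hP), ?_⟩
  intro z hz
  set w : W := b.repr.symm (WithLp.toLp 2 z)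
  have hw : ‖(w : 𝔼 n)‖ ^ 2 ≤ 3 / 4 := by
    have hz : ∀ i, z i ^ 2 ≤ ((2 * n : ℝ)⁻¹) ^ 2 := fun i => by
      rw [← sq_abs]
      gcongr
      exact (norm_le_pi_norm z i).trans (mem_closedBall_zero_iff.mp hz)
    have hn1 : (1 : ℝ) ≤ n := by exact_mod_cast hn
    calc ‖(w : 𝔼 n)‖ ^ 2 = ∑ i, z i ^ 2 := by
          rw [show ‖(w : 𝔼 n)‖ = ‖WithLp.toLp 2 z‖ from b.repr.symm.norm_map _,
            EuclideanSpace.real_norm_sq_eq]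
      _ ≤ ∑ _i : Fin (n - 1), ((2 * n : ℝ)⁻¹) ^ 2 := Finset.sum_le_sum fun i _ => hz i
      _ ≤ n * ((2 * n : ℝ)⁻¹) ^ 2 := by
          rw [Finset.sum_const, Finset.card_univ, Fintype.card_fin, nsmul_eq_mul]
          gcongr
          exact_mod_cast Nat.sub_le n 1
      _ ≤ 3 / 4 := by
          rw [inv_pow, ← div_eq_mul_inv, div_le_iff₀ (by positivity)]
          nlinarith
  have huw : ⟪u, (w : 𝔼 n)⟫ = 0 :=
    (Submodule.mem_orthogonal_singleton_iff_inner_right).mp w.2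
  refine ⟨_, sqrt_smul_add_mem_sphericalCap hu huw hw, ?_⟩
  have hPu : W.orthogonalProjectionOnto u = 0 :=
    Submodule.orthogonalProjectionOnto_orthogonal_apply_eq_zero
      (Submodule.mem_span_singleton_self u)
  simp [hPu, w]

lemma ofReal_le_hausdorffMeasure_sphericalCap (hn : 0 < n) {u : 𝔼 n} (hu : ‖u‖ = 1) :
    ENNReal.ofReal ((n : ℝ)⁻¹ ^ (n - 1)) ≤ μH[(n : ℝ) - 1] (sphericalCap u) := by
  obtain ⟨F, hF, hball⟩ := exists_lipschitzWith_closedBall_subset_image_sphericalCap hn hu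
  have hdim : ((n - 1 : ℕ) : ℝ) = n - 1 := by rw [Nat.cast_sub hn, Nat.cast_one]
  calc ENNReal.ofReal ((n : ℝ)⁻¹ ^ (n - 1))
      = volume (closedBall (0 : Fin (n - 1) → ℝ) (2 * n : ℝ)⁻¹) := by
        rw [Real.volume_pi_closedBall _ (by positivity), Fintype.card_fin]
        congr 2
        field_simp
    _ = μH[(n : ℝ) - 1] (closedBall (0 : Fin (n - 1) → ℝ) (2 * n : ℝ)⁻¹) := by
        rw [← hdim, ← hausdorffMeasure_pi_real, Fintype.card_fin]
    _ ≤ μH[(n : ℝ) - 1] (F '' sphericalCap u) := measure_mono hball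
    _ ≤ μH[(n : ℝ) - 1] (sphericalCap u) := by
        simpa using hF.hausdorffMeasure_image_le (hdim ▸ Nat.cast_nonneg _) _

lemma sphMeasure_sphericalCap (u : 𝔼 n) :
    sphMeasure n (sphericalCap u) = μH[(n : ℝ) - 1] (sphericalCap u) := by
  rw [sphMeasure, Measure.restrict_apply (isClosed_sphericalCap u).measurableSet]
  exact congrArg _ (inter_eq_left.mpr inter_subset_left)

end SphericalCap

lemma ofReal_mul_measure_le_ofReal_integral {α : Type*} [MeasurableSpace α] {μ : Measure α}
    {f : α → ℝ} {s : Set α} {a : ℝ} (hf : Integrable f μ) (hf0 : 0 ≤ᵐ[μ] f)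
    (hs : MeasurableSet s) (has : ∀ x ∈ s, a ≤ f x) :
    ENNReal.ofReal a * μ s ≤ ENNReal.ofReal (∫ x, f x ∂μ) :=
  calc ENNReal.ofReal a * μ s = ∫⁻ _ in s, ENNReal.ofReal a ∂μ := (setLIntegral_const _ _).symm
    _ ≤ ∫⁻ x in s, ENNReal.ofReal (f x) ∂μ := by
        refine lintegral_mono_ae ?_
        filter_upwards [ae_restrict_mem hs] with x hx
        exact ENNReal.ofReal_le_ofReal (has x hx)
    _ ≤ ∫⁻ x, ENNReal.ofReal (f x) ∂μ := setLIntegral_le_lintegral _ _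
    _ = ENNReal.ofReal (∫ x, f x ∂μ) := (ofReal_integral_eq_lintegral_ofReal hf hf0).symm

section RadialFunction

variable {n : ℕ} {K : Set (𝔼 n)}

lemma radialFn_pos (hK : Bornology.IsBounded K) (h0 : (0 : 𝔼 n) ∈ interior K) {v : 𝔼 n}
    (hv : v ≠ 0) : 0 < radialFn K v := by
  obtain ⟨ε, hε, hball⟩ := Metric.mem_nhds_iff.mp (mem_interior_iff_mem_nhds.mp h0)
  obtain ⟨M, hM⟩ := hK.subset_closedBall 0
  have hv' : 0 < ‖v‖ := norm_pos_iff.mpr hv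
  have hbdd : BddAbove {r : ℝ | 0 < r ∧ r • v ∈ K} := by
    refine ⟨M / ‖v‖, fun r ⟨hr, hrK⟩ => ?_⟩
    have := mem_closedBall_zero_iff.mp (hM hrK)
    rw [norm_smul, Real.norm_of_nonneg hr.le] at this
    rwa [le_div_iff₀ hv']
  have hmem : (ε / (2 * ‖v‖)) • v ∈ K := hball <| by
    rw [mem_ball_zero_iff, norm_smul, Real.norm_of_nonneg (by positivity)]
    field_simp
    linarith
  exact (by positivity : 0 < ε / (2 * ‖v‖)).trans_le (le_csSup hbdd ⟨by positivity, hmem⟩)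

lemma radialFn_le_of_mem_polarBody {x v : 𝔼 n} (hx : x ∈ polarBody K) {a : ℝ} (ha : 0 < a)
    (hv : a ≤ ⟪x, v⟫) : radialFn K v ≤ a⁻¹ := by
  refine Real.sSup_le (fun r ⟨hr, hrK⟩ => ?_) (inv_nonneg.mpr ha.le)
  have h := hx _ hrK
  rw [real_inner_smul_right] at h
  rw [← one_div, le_div_iff₀ ha]
  nlinarith

end RadialFunction

lemma le_mul_dualQuerm_of_mem_polarBody {n : ℕ} (hn : 0 < n) {ϕ : ℝ → ℝ}
    (hϕa : AntitoneOn ϕ (Ioi 0)) (hϕ : ∀ t > (0 : ℝ), 0 ≤ ϕ t) {K : Set (𝔼 n)}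
    (hK : Bornology.IsBounded K) (h0 : (0 : 𝔼 n) ∈ interior K)
    (hint : Integrable (fun v => ϕ (radialFn K v)) (sphMeasure n))
    {x : 𝔼 n} (hx : x ∈ polarBody K) (hx0 : x ≠ 0) :
    ϕ (2 / ‖x‖) * (n : ℝ)⁻¹ ^ (n - 1) ≤ n * dualQuerm ϕ K := by
  have hx' : 0 < ‖x‖ := norm_pos_iff.mpr hx0
  have hρ : ∀ v ∈ unitSphere n, 0 < radialFn K v := fun v hv =>
    radialFn_pos hK h0 (ne_zero_of_mem_unit_sphere ⟨v, hv⟩)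
  have hf0 : 0 ≤ᵐ[sphMeasure n] fun v => ϕ (radialFn K v) := by
    filter_upwards [ae_restrict_mem isClosed_sphere.measurableSet] with v hv
    exact hϕ _ (hρ v hv)
  have hcap : ∀ v ∈ sphericalCap (‖x‖⁻¹ • x), ϕ (2 / ‖x‖) ≤ ϕ (radialFn K v) := by
    rintro v ⟨hv, hvx⟩
    have hvx' : ‖x‖ / 2 ≤ ⟪x, v⟫ := by
      rw [mem_ofPred_eq, real_inner_smul_left, ← div_eq_inv_mul, le_div_iff₀ hx'] at hvx
      linarith
    have hρv := radialFn_le_of_mem_polarBody hx (by positivity) hvx'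
    rw [inv_div] at hρv
    exact hϕa (hρ v hv) (by positivity : (0 : ℝ) < 2 / ‖x‖) hρv
  have hu : ‖‖x‖⁻¹ • x‖ = 1 := by rw [norm_smul, norm_inv, norm_norm, inv_mul_cancel₀ hx'.ne']
  have hcapMeasure := ofReal_le_hausdorffMeasure_sphericalCap hn hu
  rw [← sphMeasure_sphericalCap] at hcapMeasure
  have hbound := (mul_le_mul_right hcapMeasure _).trans <| ofReal_mul_measure_le_ofReal_integral
    hint hf0 (isClosed_sphericalCap _).measurableSet hcap
  rw [← ENNReal.ofReal_mul (hϕ _ (by positivity)),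
    ENNReal.ofReal_le_ofReal_iff (integral_nonneg_of_ae hf0)] at hbound
  rwa [dualQuerm, ← mul_assoc, mul_inv_cancel₀ (by positivity), one_mul]

theorem polar_uniformly_bounded_general {n : ℕ} (hn : 0 < n) (ϕ : ℝ → ℝ)
    (hϕa : StrictAntiOn ϕ (Set.Ioi 0)) (hϕp : ∀ t > (0 : ℝ), 0 < ϕ t)
    (hϕ0 : Tendsto ϕ (𝓝[>] (0 : ℝ)) atTop)
    (c : ℝ) (hc : 0 < c)
    (Q : ℕ → Set (EuclideanSpace ℝ (Fin n))) (hQ : ∀ i, IsConvexBody0 (Q i))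
    (hV : ∀ i, dualQuerm ϕ (Q i) = c) :
    ∃ R > (0 : ℝ), ∀ i, polarBody (Q i) ⊆ Metric.closedBall (0 : EuclideanSpace ℝ (Fin n)) R := by
  set ν : ℝ := (n : ℝ)⁻¹ ^ (n - 1)
  obtain ⟨t₀, ht₀, hϕ_large⟩ : ∃ t₀ > 0, ∀ t ∈ Ioo 0 t₀, n * c / ν < ϕ t :=
    (nhdsGT_basis 0).eventually_iff.mp (hϕ0.eventually_gt_atTop _)
  refine ⟨2 / t₀, by positivity, fun i x hx => ?_⟩
  rw [mem_closedBall_zero_iff]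
  by_contra! hxR
  have hx0 : x ≠ 0 := norm_pos_iff.mp ((by positivity : 0 < 2 / t₀).trans hxR)
  have hint : Integrable (fun v => ϕ (radialFn (Q i) v)) (sphMeasure n) :=
    .of_integral_ne_zero (right_ne_zero_of_mul ((hV i).trans_ne hc.ne'))
  have hbound := le_mul_dualQuerm_of_mem_polarBody hn hϕa.antitoneOn
    (fun t ht => (hϕp t ht).le) (hQ i).1.isBounded (hQ i).2.2 hint hx hx0
  rw [hV i, ← le_div_iff₀ (by positivity)] at hbound
  have hsmall : 2 / ‖x‖ ∈ Ioo 0 t₀ :=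
    ⟨by positivity, (div_lt_comm₀ ht₀ (norm_pos_iff.mpr hx0)).mp hxR⟩
  exact (hϕ_large _ hsmall).not_ge hbound

/-- **Step 1 in the proof of Theorem 5.1**. Let `ϕ : (0,∞) → (0,∞)` be strictly
decreasing with `ϕ(0⁺) = ∞` and `ϕ(∞) = 0`, and let `c > 0`. If `Q_i ∈ 𝒦₀ⁿ` satisfy
`Ṽ_ϕ(Q_i) = c` for all `i`, then there is `R > 0` with `Q_i* ⊆ R·B₂ⁿ` for all `i`. -/
theorem polar_uniformly_bounded {n : ℕ} (hn : 0 < n) (ϕ : ℝ → ℝ)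
    (hϕa : StrictAntiOn ϕ (Set.Ioi 0)) (hϕp : ∀ t > (0 : ℝ), 0 < ϕ t)
    (hϕ0 : Tendsto ϕ (𝓝[>] (0 : ℝ)) atTop) (hϕtop : Tendsto ϕ atTop (𝓝 (0 : ℝ)))
    (c : ℝ) (hc : 0 < c)
    (Q : ℕ → Set (EuclideanSpace ℝ (Fin n))) (hQ : ∀ i, IsConvexBody0 (Q i))
    (hV : ∀ i, dualQuerm ϕ (Q i) = c) :
    ∃ R > (0 : ℝ), ∀ i, polarBody (Q i) ⊆ Metric.closedBall (0 : EuclideanSpace ℝ (Fin n)) R :=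
  polar_uniformly_bounded_general hn ϕ hϕa hϕp hϕ0 c hc Q hQ hV
end
end
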